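/- arXiv:1312.4774 — 5 statements merged into one kernel-verified Lean document; each statement's English description precedes it below -/
import Mathlib

section
/- The rows of the conservation matrix Z form a basis of the left kernel of the stoichiometric matrix S: one has Z·S = 0, the three rows of Z are linearly independent, and the rank of S equals 3n, so that every row vector v ∈ ℝ^{3+3n} with vᵀS = 0 is a linear combination of the rows of Z. -/
open Finset

namespace Phos

noncomputable section

/-- Standard basis vector of `ℝ^N`, with `1`-based index `j`. -/
def e (N : ℕ) (j : ℕ) : Fin N → ℝ := fun m => if (m : ℕ) + 1 = j then 1 else 0

/-- Standard basis vector of `ℕ^N`, with `1`-based index `j`. -/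
def eN (N : ℕ) (j : ℕ) : Fin N → ℕ := fun m => if (m : ℕ) + 1 = j then 1 else 0

/-- The stoichiometric matrix `S` of the `n`-site sequential distributive
phosphorylation network.  For each `i = 1,…,n` the six columns `6(i−1)+1,…,6(i−1)+6`
are `e_{1+3i}−e_1−e_{3i−1}`, `e_1+e_{3i−1}−e_{1+3i}`, `e_1+e_{2+3i}−e_{1+3i}`,
`e_{3+3i}−e_3−e_{2+3i}`, `e_3+e_{2+3i}−e_{3+3i}`, `e_3+e_{3i−1}−e_{3+3i}`. -/
def Smat (n : ℕ) : Matrix (Fin (3*n+3)) (Fin (6*n)) ℝ :=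
  Matrix.of fun m r =>
    (![e (3*n+3) (1+3*((r : ℕ)/6+1)) - e (3*n+3) 1 - e (3*n+3) (3*((r : ℕ)/6+1)-1),
       e (3*n+3) 1 + e (3*n+3) (3*((r : ℕ)/6+1)-1) - e (3*n+3) (1+3*((r : ℕ)/6+1)),
       e (3*n+3) 1 + e (3*n+3) (2+3*((r : ℕ)/6+1)) - e (3*n+3) (1+3*((r : ℕ)/6+1)),
       e (3*n+3) (3+3*((r : ℕ)/6+1)) - e (3*n+3) 3 - e (3*n+3) (2+3*((r : ℕ)/6+1)),
       e (3*n+3) 3 + e (3*n+3) (2+3*((r : ℕ)/6+1)) - e (3*n+3) (3+3*((r : ℕ)/6+1)),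
       e (3*n+3) 3 + e (3*n+3) (3*((r : ℕ)/6+1)-1) - e (3*n+3) (3+3*((r : ℕ)/6+1))])
      ⟨(r : ℕ) % 6, Nat.mod_lt _ (by norm_num)⟩ m

/-- The rate exponent matrix `Y`: for each `i = 1,…,n` the six columns
`6(i−1)+1,…,6(i−1)+6` are `e_1+e_{3i−1}`, `e_{1+3i}`, `e_{1+3i}`,
`e_3+e_{2+3i}`, `e_{3+3i}`, `e_{3+3i}`. -/
def Ymat (n : ℕ) : Matrix (Fin (3*n+3)) (Fin (6*n)) ℕ :=
  Matrix.of fun m r =>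
    (![eN (3*n+3) 1 + eN (3*n+3) (3*((r : ℕ)/6+1)-1),
       eN (3*n+3) (1+3*((r : ℕ)/6+1)),
       eN (3*n+3) (1+3*((r : ℕ)/6+1)),
       eN (3*n+3) 3 + eN (3*n+3) (2+3*((r : ℕ)/6+1)),
       eN (3*n+3) (3+3*((r : ℕ)/6+1)),
       eN (3*n+3) (3+3*((r : ℕ)/6+1))])
      ⟨(r : ℕ) % 6, Nat.mod_lt _ (by norm_num)⟩ m

/-- The monomial map `Φ(x)_j = ∏ₘ xₘ^{Y_{mj}}`. -/
def Phi (n : ℕ) (x : Fin (3*n+3) → ℝ) : Fin (6*n) → ℝ :=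
  fun r => ∏ m, x m ^ (Ymat n m r)

/-- The conservation matrix `Z` (rows `z1, z2, z3`). -/
def Zmat (n : ℕ) : Matrix (Fin 3) (Fin (3*n+3)) ℝ :=
  Matrix.of fun r j =>
    if (r : ℕ) = 0 then (if (j : ℕ) % 3 = 0 then 1 else 0)
    else if (r : ℕ) = 1 then
      (if (j : ℕ) % 3 = 1 then 1 else if (j : ℕ) = 0 ∨ (j : ℕ) = 2 then -1 else 0)
    else (if (j : ℕ) % 3 = 2 then 1 else 0)

/-- The `6 × 3` block `E0`. -/
def E0 : Fin 6 → Fin 3 → ℝ :=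
  ![![1,0,1], ![1,0,0], ![0,0,1], ![0,1,1], ![0,1,0], ![0,0,1]]

/-- The block diagonal matrix `E` with `n` copies of `E0`. -/
def Emat (n : ℕ) : Matrix (Fin (6*n)) (Fin (3*n)) ℝ :=
  Matrix.of fun r c =>
    if (r : ℕ) / 6 = (c : ℕ) / 3 then
      E0 ⟨(r : ℕ) % 6, Nat.mod_lt _ (by norm_num)⟩ ⟨(c : ℕ) % 3, Nat.mod_lt _ (by norm_num)⟩
    else 0

/-- The matrix `L ∈ ℤ^{(3+3n)×3}`: row `1 = (1, n−1, −1)`, row `2 = (−1, −n, 0)`,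
row `3 = (1, n−2, −1)`, and for `i = 1,…,n` rows `1+3i` and `3+3i` equal
`(0, i−2, −1)` while row `2+3i = (−1, i−n, 0)`. -/
def Lmat (n : ℕ) : Matrix (Fin (3*n+3)) (Fin 3) ℤ :=
  Matrix.of fun j c =>
    if (j : ℕ) = 0 then ![1, (n : ℤ) - 1, -1] c
    else if (j : ℕ) = 1 then ![-1, -(n : ℤ), 0] c
    else if (j : ℕ) = 2 then ![1, (n : ℤ) - 2, -1] c
    else if (j : ℕ) % 3 = 1 then ![-1, (((j : ℕ) / 3 : ℕ) : ℤ) - (n : ℤ), 0] c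
    else ![0, (((j : ℕ) / 3 : ℕ) : ℤ) - 2, -1] c

/-- `g^L ∈ ℝ_{>0}^{3+3n}`, `(g^L)_j = g₁^{L_{j1}} g₂^{L_{j2}} g₃^{L_{j3}}`. -/
def gL (n : ℕ) (g : Fin 3 → ℝ) : Fin (3*n+3) → ℝ :=
  fun j => ∏ c, g c ^ (Lmat n j c)

/-- The coset condition map `Θ(g,a) = Z diag(a) (g^L − 𝟙)`. -/
def Theta (n : ℕ) (g : Fin 3 → ℝ) (a : Fin (3*n+3) → ℝ) : Fin 3 → ℝ :=
  (Zmat n).mulVec (fun j => a j * (gL n g j - 1))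

/-- The rate constants `κ(a,λ)_j = (Eλ)_j / Φ(a)_j`. -/
def kappaOf (n : ℕ) (a : Fin (3*n+3) → ℝ) (lam : Fin (3*n) → ℝ) : Fin (6*n) → ℝ :=
  fun r => (Emat n).mulVec lam r / Phi n a r

/-- `x` is a (positive) steady state of `ẋ = S diag(κ) Φ(x)`. -/
def isSteady (n : ℕ) (κ : Fin (6*n) → ℝ) (x : Fin (3*n+3) → ℝ) : Prop :=
  (Smat n).mulVec (fun r => κ r * Phi n x r) = 0

/-- The `1`-based component `a_j` of a vector `a ∈ ℝ^{3+3n}`. -/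
def av (n : ℕ) (a : Fin (3*n+3) → ℝ) (j : ℕ) : ℝ :=
  if h : j - 1 < 3*n+3 then a ⟨j - 1, h⟩ else 0

/-- `ω1 = Σ_{k=0}^n a_{1+3k}`. -/
def om1 (n : ℕ) (a : Fin (3*n+3) → ℝ) : ℝ := ∑ k ∈ Finset.range (n+1), av n a (1+3*k)

/-- `ω2 = −a₁ − a₃ + Σ_{k=0}^n a_{2+3k}`. -/
def om2 (n : ℕ) (a : Fin (3*n+3) → ℝ) : ℝ :=
  -(av n a 1) - av n a 3 + ∑ k ∈ Finset.range (n+1), av n a (2+3*k)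

/-- `ω3 = Σ_{k=0}^n a_{3+3k}`. -/
def om3 (n : ℕ) (a : Fin (3*n+3) → ℝ) : ℝ := ∑ k ∈ Finset.range (n+1), av n a (3+3*k)

/-- `Ω2(ξ) = Σ_{k=0}^n a_{2+3k} ξ^k`. -/
def Om2 (n : ℕ) (a : Fin (3*n+3) → ℝ) (ξ : ℝ) : ℝ :=
  ∑ k ∈ Finset.range (n+1), av n a (2+3*k) * ξ ^ k

/-- `Ω4(ξ) = Σ_{k=1}^n a_{1+3k} ξ^{k−1}`. -/
def Om4 (n : ℕ) (a : Fin (3*n+3) → ℝ) (ξ : ℝ) : ℝ :=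
  ∑ k ∈ Finset.Icc 1 n, av n a (1+3*k) * ξ ^ (k-1)

/-- `Ω6(ξ) = Σ_{k=1}^n a_{3+3k} ξ^{k−1}`. -/
def Om6 (n : ℕ) (a : Fin (3*n+3) → ℝ) (ξ : ℝ) : ℝ :=
  ∑ k ∈ Finset.Icc 1 n, av n a (3+3*k) * ξ ^ (k-1)

/-- `Δ(ξ) = (a₁/ω1)ξ − a₃/ω3`. -/
def Dlt (n : ℕ) (a : Fin (3*n+3) → ℝ) (ξ : ℝ) : ℝ :=
  av n a 1 / om1 n a * ξ - av n a 3 / om3 n a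

/-- `ξ* = (ω1 a₃)/(a₁ ω3)`. -/
def xistar (n : ℕ) (a : Fin (3*n+3) → ℝ) : ℝ :=
  om1 n a * av n a 3 / (av n a 1 * om3 n a)

/-- `F1(ξ) = Ω6(ξ)/ω3 − Ω4(ξ)/ω1`. -/
def F1 (n : ℕ) (a : Fin (3*n+3) → ℝ) (ξ : ℝ) : ℝ :=
  Om6 n a ξ / om3 n a - Om4 n a ξ / om1 n a

/-- `F3(ξ) = (a₁ξ/ω1)(Ω6(ξ)/ω3) − (a₃/ω3)(Ω4(ξ)/ω1)`. -/
def F3 (n : ℕ) (a : Fin (3*n+3) → ℝ) (ξ : ℝ) : ℝ :=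
  av n a 1 * ξ / om1 n a * (Om6 n a ξ / om3 n a) - av n a 3 / om3 n a * (Om4 n a ξ / om1 n a)

/-- `A(ξ) = (Ω4(ξ)+Ω6(ξ))Ω2(ξ)`. -/
def Ap (n : ℕ) (a : Fin (3*n+3) → ℝ) (ξ : ℝ) : ℝ := (Om4 n a ξ + Om6 n a ξ) * Om2 n a ξ

/-- `B(ξ) = (a₁ξ + a₃)Ω2(ξ) − ω2 ξ (Ω4(ξ)+Ω6(ξ))`. -/
def Bp (n : ℕ) (a : Fin (3*n+3) → ℝ) (ξ : ℝ) : ℝ :=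
  (av n a 1 * ξ + av n a 3) * Om2 n a ξ - om2 n a * ξ * (Om4 n a ξ + Om6 n a ξ)

/-- `C(ξ) = ξ(a₁ξ + a₃)(ω1+ω2+ω3)`. -/
def Cp (n : ℕ) (a : Fin (3*n+3) → ℝ) (ξ : ℝ) : ℝ :=
  ξ * (av n a 1 * ξ + av n a 3) * (om1 n a + om2 n a + om3 n a)

/-- `P(ξ) = A(ξ)Δ(ξ)² + B(ξ)Δ(ξ)F1(ξ) − C(ξ)F1(ξ)²`. -/
def Pp (n : ℕ) (a : Fin (3*n+3) → ℝ) (ξ : ℝ) : ℝ :=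
  Ap n a ξ * (Dlt n a ξ)^2 + Bp n a ξ * Dlt n a ξ * F1 n a ξ - Cp n a ξ * (F1 n a ξ)^2

/-- `θ(ξ) = 2C(ξ)F1(ξ) − Δ(ξ)[B(ξ) + (B(ξ)² + 4A(ξ)C(ξ))^{1/2}]`. -/
def thetaFun (n : ℕ) (a : Fin (3*n+3) → ℝ) (ξ : ℝ) : ℝ :=
  2 * Cp n a ξ * F1 n a ξ -
    Dlt n a ξ * (Bp n a ξ + Real.sqrt ((Bp n a ξ)^2 + 4 * Ap n a ξ * Cp n a ξ))

/-- `g1(ξ) = ξ^{1−n} F1(ξ)/Δ(ξ)`. -/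
def g1f (n : ℕ) (a : Fin (3*n+3) → ℝ) (ξ : ℝ) : ℝ :=
  ξ ^ ((1 : ℤ) - (n : ℤ)) * F1 n a ξ / Dlt n a ξ

/-- `g3(ξ) = ξ^{−1} F3(ξ)/Δ(ξ)`. -/
def g3f (n : ℕ) (a : Fin (3*n+3) → ℝ) (ξ : ℝ) : ℝ :=
  ξ⁻¹ * F3 n a ξ / Dlt n a ξ

/-- The candidate second steady state `b = diag(g^L) a` built from a zero `ξ`
of the determining equation, with `g = (g1(ξ), ξ, g3(ξ))`. -/
def bOf (n : ℕ) (a : Fin (3*n+3) → ℝ) (ξ : ℝ) : Fin (3*n+3) → ℝ :=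
  fun j => gL n ![g1f n a ξ, ξ, g3f n a ξ] j * a j

end

end Phos
namespace Phos
/-- Dot product with a standard basis vector. -/
lemma dot_e' (n : ℕ) (v : Fin (3*n+3) → ℝ) (j : ℕ) (k : Fin (3*n+3))
    (hk : (k:ℕ) + 1 = j) : ∑ m, v m * e (3*n+3) j m = v k := by
  rw [Finset.sum_eq_single k]
  · simp only [e]; rw [if_pos hk, mul_one]
  · intro b _ hb
    simp only [e]; rw [if_neg, mul_zero]
    intro hc; exact hb (Fin.ext (by omega))
  · intro h; exact absurd (Finset.mem_univ _) h

lemma smat_col0 {n : ℕ} (r : Fin (6*n)) (i : ℕ) (hd : (r:ℕ)/6 + 1 = i)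
    (hm : (r:ℕ)%6 = 0) (m : Fin (3*n+3)) :
    Smat n m r = (e (3*n+3) (1+3*i) - e (3*n+3) 1 - e (3*n+3) (3*i-1)) m := by
  simp only [Smat, Matrix.of_apply, hd, hm]; rfl

lemma smat_col1 {n : ℕ} (r : Fin (6*n)) (i : ℕ) (hd : (r:ℕ)/6 + 1 = i)
    (hm : (r:ℕ)%6 = 1) (m : Fin (3*n+3)) :
    Smat n m r = (e (3*n+3) 1 + e (3*n+3) (3*i-1) - e (3*n+3) (1+3*i)) m := by
  simp only [Smat, Matrix.of_apply, hd, hm]; rfl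

lemma smat_col2 {n : ℕ} (r : Fin (6*n)) (i : ℕ) (hd : (r:ℕ)/6 + 1 = i)
    (hm : (r:ℕ)%6 = 2) (m : Fin (3*n+3)) :
    Smat n m r = (e (3*n+3) 1 + e (3*n+3) (2+3*i) - e (3*n+3) (1+3*i)) m := by
  simp only [Smat, Matrix.of_apply, hd, hm]; rfl

lemma smat_col3 {n : ℕ} (r : Fin (6*n)) (i : ℕ) (hd : (r:ℕ)/6 + 1 = i)
    (hm : (r:ℕ)%6 = 3) (m : Fin (3*n+3)) :
    Smat n m r = (e (3*n+3) (3+3*i) - e (3*n+3) 3 - e (3*n+3) (2+3*i)) m := by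
  simp only [Smat, Matrix.of_apply, hd, hm]; rfl

lemma smat_col4 {n : ℕ} (r : Fin (6*n)) (i : ℕ) (hd : (r:ℕ)/6 + 1 = i)
    (hm : (r:ℕ)%6 = 4) (m : Fin (3*n+3)) :
    Smat n m r = (e (3*n+3) 3 + e (3*n+3) (2+3*i) - e (3*n+3) (3+3*i)) m := by
  simp only [Smat, Matrix.of_apply, hd, hm]; rfl

lemma smat_col5 {n : ℕ} (r : Fin (6*n)) (i : ℕ) (hd : (r:ℕ)/6 + 1 = i)
    (hm : (r:ℕ)%6 = 5) (m : Fin (3*n+3)) :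
    Smat n m r = (e (3*n+3) 3 + e (3*n+3) (3*i-1) - e (3*n+3) (3+3*i)) m := by
  simp only [Smat, Matrix.of_apply, hd, hm]; rfl

lemma dot_sub_sub (n : ℕ) (v : Fin (3*n+3) → ℝ) (a b c : ℕ)
    (ka kb kc : Fin (3*n+3)) (ha : (ka:ℕ)+1 = a) (hb : (kb:ℕ)+1 = b)
    (hc : (kc:ℕ)+1 = c) :
    ∑ m, v m * (e (3*n+3) a - e (3*n+3) b - e (3*n+3) c) m = v ka - v kb - v kc := by
  simp only [Pi.sub_apply, mul_sub, Finset.sum_sub_distrib]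
  rw [dot_e' n v a ka ha, dot_e' n v b kb hb, dot_e' n v c kc hc]

lemma dot_add_sub (n : ℕ) (v : Fin (3*n+3) → ℝ) (a b c : ℕ)
    (ka kb kc : Fin (3*n+3)) (ha : (ka:ℕ)+1 = a) (hb : (kb:ℕ)+1 = b)
    (hc : (kc:ℕ)+1 = c) :
    ∑ m, v m * (e (3*n+3) a + e (3*n+3) b - e (3*n+3) c) m = v ka + v kb - v kc := by
  simp only [Pi.sub_apply, Pi.add_apply, mul_sub, mul_add,
    Finset.sum_sub_distrib, Finset.sum_add_distrib]
  rw [dot_e' n v a ka ha, dot_e' n v b kb hb, dot_e' n v c kc hc]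

lemma Z_row0 (n : ℕ) (j : Fin (3*n+3)) :
    Zmat n 0 j = if (j:ℕ) % 3 = 0 then 1 else 0 := rfl

lemma Z_row1 (n : ℕ) (j : Fin (3*n+3)) :
    Zmat n 1 j = if (j:ℕ) % 3 = 1 then 1
      else if (j:ℕ) = 0 ∨ (j:ℕ) = 2 then -1 else 0 := rfl

lemma Z_row2 (n : ℕ) (j : Fin (3*n+3)) :
    Zmat n 2 j = if (j:ℕ) % 3 = 2 then 1 else 0 := rfl
lemma Zrow_vecMul (n : ℕ) (r : Fin 3) :
    Matrix.vecMul (Zmat n r) (Smat n) = 0 := by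
  funext col
  have hlt := col.isLt
  have hi1 : 1 ≤ (col:ℕ)/6 + 1 := by omega
  have hi2 : (col:ℕ)/6 + 1 ≤ n := by omega
  set i := (col:ℕ)/6 + 1 with hidef
  have p1 : (0:ℕ) < 3*n+3 := by omega
  have p3 : (2:ℕ) < 3*n+3 := by omega
  have pm : 3*i-2 < 3*n+3 := by omega
  have pp1 : 3*i < 3*n+3 := by omega
  have pp2 : 3*i+1 < 3*n+3 := by omega
  have pp3 : 3*i+2 < 3*n+3 := by omega
  have hc6 : (col:ℕ)%6 < 6 := Nat.mod_lt _ (by norm_num)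
  show ∑ j, Zmat n r j * Smat n j col = 0
  have Zval : ∀ (x : ℕ) (hx : x < 3*n+3), Zmat n r ⟨x, hx⟩ =
      if (r:ℕ) = 0 then (if x % 3 = 0 then 1 else 0)
      else if (r:ℕ) = 1 then
        (if x % 3 = 1 then 1 else if x = 0 ∨ x = 2 then -1 else 0)
      else (if x % 3 = 2 then 1 else 0) := fun x hx => rfl
  have hv1 := Zval 0 p1
  have hv3 := Zval 2 p3
  have hvm := Zval (3*i-2) pm
  have hq1 := Zval (3*i) pp1
  have hq2 := Zval (3*i+1) pp2
  have hq3 := Zval (3*i+2) pp3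
  have hm1 : (3*i-2) % 3 = 1 := by omega
  have hm0 : (3*i) % 3 = 0 := by omega
  have hm2 : (3*i+1) % 3 = 1 := by omega
  have hm3 : (3*i+2) % 3 = 2 := by omega
  have hne1 : ¬(3*i = 0 ∨ 3*i = 2) := by omega
  have hne2 : ¬(3*i+1 = 0 ∨ 3*i+1 = 2) := by omega
  have hne3 : ¬(3*i+2 = 0 ∨ 3*i+2 = 2) := by omega
  rw [hm1] at hvm; rw [hm0] at hq1; rw [hm2] at hq2; rw [hm3] at hq3
  simp only [if_neg hne1, if_neg hne3] at hq1 hq3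
  interval_cases h : (col:ℕ)%6
  · simp only [smat_col0 col i hidef.symm h]
    rw [dot_sub_sub n _ (1+3*i) 1 (3*i-1) ⟨3*i, pp1⟩ ⟨0, p1⟩ ⟨3*i-2, pm⟩
      (show 3*i+1 = 1+3*i by omega) (show 0+1 = 1 by omega)
      (show 3*i-2+1 = 3*i-1 by omega), hq1, hv1, hvm]
    fin_cases r <;> norm_num
  · simp only [smat_col1 col i hidef.symm h]
    rw [dot_add_sub n _ 1 (3*i-1) (1+3*i) ⟨0, p1⟩ ⟨3*i-2, pm⟩ ⟨3*i, pp1⟩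
      (show 0+1 = 1 by omega) (show 3*i-2+1 = 3*i-1 by omega)
      (show 3*i+1 = 1+3*i by omega), hq1, hv1, hvm]
    fin_cases r <;> norm_num
  · simp only [smat_col2 col i hidef.symm h]
    rw [dot_add_sub n _ 1 (2+3*i) (1+3*i) ⟨0, p1⟩ ⟨3*i+1, pp2⟩ ⟨3*i, pp1⟩
      (show 0+1 = 1 by omega) (show 3*i+1+1 = 2+3*i by omega)
      (show 3*i+1 = 1+3*i by omega), hq1, hv1, hq2]
    fin_cases r <;> norm_num
  · simp only [smat_col3 col i hidef.symm h]
    rw [dot_sub_sub n _ (3+3*i) 3 (2+3*i) ⟨3*i+2, pp3⟩ ⟨2, p3⟩ ⟨3*i+1, pp2⟩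
      (show 3*i+2+1 = 3+3*i by omega) (show 2+1 = 3 by omega)
      (show 3*i+1+1 = 2+3*i by omega), hq3, hv3, hq2]
    fin_cases r <;> norm_num
  · simp only [smat_col4 col i hidef.symm h]
    rw [dot_add_sub n _ 3 (2+3*i) (3+3*i) ⟨2, p3⟩ ⟨3*i+1, pp2⟩ ⟨3*i+2, pp3⟩
      (show 2+1 = 3 by omega) (show 3*i+1+1 = 2+3*i by omega)
      (show 3*i+2+1 = 3+3*i by omega), hq3, hv3, hq2]
    fin_cases r <;> norm_num
  · simp only [smat_col5 col i hidef.symm h]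
    rw [dot_add_sub n _ 3 (3*i-1) (3+3*i) ⟨2, p3⟩ ⟨3*i-2, pm⟩ ⟨3*i+2, pp3⟩
      (show 2+1 = 3 by omega) (show 3*i-2+1 = 3*i-1 by omega)
      (show 3*i+2+1 = 3+3*i by omega), hq3, hv3, hvm]
    fin_cases r <;> norm_num
lemma vecMul_zero_mem_span (n : ℕ) (hn : 2 ≤ n) (v : Fin (3*n+3) → ℝ)
    (hv : Matrix.vecMul v (Smat n) = 0) :
    ∃ c : Fin 3 → ℝ, v = ∑ r, c r • Zmat n r := by
  classical
  set w : ℕ → ℝ := fun j => if h : j < 3*n+3 then v ⟨j, h⟩ else 0 with hw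
  have hwv : ∀ (j : ℕ) (h : j < 3*n+3), w j = v ⟨j, h⟩ := fun j h => dif_pos h
  -- the three families of constraints
  have hA : ∀ i, 1 ≤ i → i ≤ n → w (3*i) - w 0 - w (3*i-2) = 0 := by
    intro i h1 h2
    have hcl : 6*(i-1) < 6*n := by omega
    have h := congrFun hv ⟨6*(i-1), hcl⟩
    have hd : ((⟨6*(i-1), hcl⟩ : Fin (6*n)) : ℕ)/6 + 1 = i := by
      simp only [Fin.val_mk]; omega
    have hm : ((⟨6*(i-1), hcl⟩ : Fin (6*n)) : ℕ)%6 = 0 := by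
      simp only [Fin.val_mk]; omega
    rw [show Matrix.vecMul v (Smat n) ⟨6*(i-1), hcl⟩
        = ∑ j, v j * Smat n j ⟨6*(i-1), hcl⟩ from rfl] at h
    simp only [smat_col0 _ i hd hm] at h
    rw [dot_sub_sub n v (1+3*i) 1 (3*i-1) ⟨3*i, by omega⟩ ⟨0, by omega⟩
      ⟨3*i-2, by omega⟩ (show 3*i+1 = 1+3*i by omega) (show 0+1 = 1 by omega)
      (show 3*i-2+1 = 3*i-1 by omega)] at h
    rw [hwv (3*i) (by omega), hwv 0 (by omega), hwv (3*i-2) (by omega)]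
    exact h
  have hC : ∀ i, 1 ≤ i → i ≤ n → w 0 + w (3*i+1) - w (3*i) = 0 := by
    intro i h1 h2
    have hcl : 6*(i-1)+2 < 6*n := by omega
    have h := congrFun hv ⟨6*(i-1)+2, hcl⟩
    have hd : ((⟨6*(i-1)+2, hcl⟩ : Fin (6*n)) : ℕ)/6 + 1 = i := by
      simp only [Fin.val_mk]; omega
    have hm : ((⟨6*(i-1)+2, hcl⟩ : Fin (6*n)) : ℕ)%6 = 2 := by
      simp only [Fin.val_mk]; omega
    rw [show Matrix.vecMul v (Smat n) ⟨6*(i-1)+2, hcl⟩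
        = ∑ j, v j * Smat n j ⟨6*(i-1)+2, hcl⟩ from rfl] at h
    simp only [smat_col2 _ i hd hm] at h
    rw [dot_add_sub n v 1 (2+3*i) (1+3*i) ⟨0, by omega⟩ ⟨3*i+1, by omega⟩
      ⟨3*i, by omega⟩ (show 0+1 = 1 by omega) (show 3*i+1+1 = 2+3*i by omega)
      (show 3*i+1 = 1+3*i by omega)] at h
    rw [hwv 0 (by omega), hwv (3*i+1) (by omega), hwv (3*i) (by omega)]
    exact h
  have hD : ∀ i, 1 ≤ i → i ≤ n → w (3*i+2) - w 2 - w (3*i+1) = 0 := by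
    intro i h1 h2
    have hcl : 6*(i-1)+3 < 6*n := by omega
    have h := congrFun hv ⟨6*(i-1)+3, hcl⟩
    have hd : ((⟨6*(i-1)+3, hcl⟩ : Fin (6*n)) : ℕ)/6 + 1 = i := by
      simp only [Fin.val_mk]; omega
    have hm : ((⟨6*(i-1)+3, hcl⟩ : Fin (6*n)) : ℕ)%6 = 3 := by
      simp only [Fin.val_mk]; omega
    rw [show Matrix.vecMul v (Smat n) ⟨6*(i-1)+3, hcl⟩
        = ∑ j, v j * Smat n j ⟨6*(i-1)+3, hcl⟩ from rfl] at h
    simp only [smat_col3 _ i hd hm] at h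
    rw [dot_sub_sub n v (3+3*i) 3 (2+3*i) ⟨3*i+2, by omega⟩ ⟨2, by omega⟩
      ⟨3*i+1, by omega⟩ (show 3*i+2+1 = 3+3*i by omega) (show 2+1 = 3 by omega)
      (show 3*i+1+1 = 2+3*i by omega)] at h
    rw [hwv (3*i+2) (by omega), hwv 2 (by omega), hwv (3*i+1) (by omega)]
    exact h
  -- w (3k+1) = w 1 for all k ≤ n
  have key1 : ∀ k, k ≤ n → w (3*k+1) = w 1 := by
    intro k
    induction k with
    | zero => intro _; norm_num
    | succ m ih =>
      intro h
      have h1 := hA (m+1) (by omega) (by omega)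
      have h2 := hC (m+1) (by omega) (by omega)
      have h3 : 3*(m+1)-2 = 3*m+1 := by omega
      rw [h3] at h1
      have := ih (by omega)
      linarith
  have keyA : ∀ i, 1 ≤ i → i ≤ n → w (3*i) = w 0 + w 1 := by
    intro i h1 h2
    have h := hA i h1 h2
    have h3 : 3*i-2 = 3*(i-1)+1 := by omega
    rw [h3] at h
    have := key1 (i-1) (by omega)
    linarith
  have keyB : ∀ i, 1 ≤ i → i ≤ n → w (3*i+1) = w 1 := fun i h1 h2 => key1 i h2
  have keyD : ∀ i, 1 ≤ i → i ≤ n → w (3*i+2) = w 2 + w 1 := by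
    intro i h1 h2
    have h := hD i h1 h2
    have := key1 i h2
    linarith
  refine ⟨![w 0 + w 1, w 1, w 2 + w 1], ?_⟩
  funext j
  have hj := j.isLt
  have hrhs : (∑ r, (![w 0 + w 1, w 1, w 2 + w 1]) r • Zmat n r) j
      = (w 0 + w 1) * Zmat n 0 j + w 1 * Zmat n 1 j + (w 2 + w 1) * Zmat n 2 j := by
    simp [Fin.sum_univ_three]
  rw [hrhs]
  have hvw : v j = w (j:ℕ) := by rw [hwv (j:ℕ) j.isLt]
  rw [hvw, Z_row0, Z_row1, Z_row2]
  rcases Nat.lt_or_ge (j:ℕ) 3 with h3 | h3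
  · interval_cases h : (j:ℕ) <;> norm_num
  · set i := (j:ℕ)/3 with hi
    have hi1 : 1 ≤ i := by omega
    have hi2 : i ≤ n := by omega
    have hq3 : (j:ℕ)%3 < 3 := Nat.mod_lt _ (by norm_num)
    interval_cases h : (j:ℕ)%3
    · have hji : (j:ℕ) = 3*i := by omega
      rw [hji, keyA i hi1 hi2]
      rw [if_neg (show ¬ (3*i = 0 ∨ 3*i = 2) by omega)]
      norm_num
    · have hji : (j:ℕ) = 3*i+1 := by omega
      rw [hji, keyB i hi1 hi2]
      norm_num
    · have hji : (j:ℕ) = 3*i+2 := by omega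
      rw [hji, keyD i hi1 hi2]
      rw [if_neg (show ¬ (3*i+2 = 0 ∨ 3*i+2 = 2) by omega)]
      norm_num

/-- The rows of `Z` form a basis of the left kernel of `S`:
`Z·S = 0`, the three rows of `Z` are linearly independent, `rank S = 3n`, and
every row vector `v` with `vᵀS = 0` is a linear combination of the rows of `Z`. -/
theorem rows_of_Z_basis_of_left_kernel (n : ℕ) (hn : 2 ≤ n) :
    Zmat n * Smat n = 0 ∧
    LinearIndependent ℝ (fun r : Fin 3 => Zmat n r) ∧
    (Smat n).rank = 3 * n ∧
    ∀ v : Fin (3*n+3) → ℝ, Matrix.vecMul v (Smat n) = 0 →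
      ∃ c : Fin 3 → ℝ, v = ∑ r, c r • Zmat n r := by
  have hZS : Zmat n * Smat n = 0 := by
    ext r col
    exact congrFun (Zrow_vecMul n r) col
  have hLI : LinearIndependent ℝ (fun r : Fin 3 => Zmat n r) := by
    rw [Fintype.linearIndependent_iff]
    intro g hg
    have hval : ∀ (x : ℕ) (hx : x < 3*n+3),
        g 0 * Zmat n 0 ⟨x, hx⟩ + g 1 * Zmat n 1 ⟨x, hx⟩ + g 2 * Zmat n 2 ⟨x, hx⟩ = 0 := by
      intro x hx
      have := congrFun hg ⟨x, hx⟩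
      simpa [Fin.sum_univ_three] using this
    have h3 := hval 3 (by omega)
    have h4 := hval 4 (by omega)
    have h5 := hval 5 (by omega)
    simp only [Z_row0, Z_row1, Z_row2, Fin.val_mk] at h3 h4 h5
    norm_num at h3 h4 h5
    intro r; fin_cases r <;> assumption
  refine ⟨hZS, hLI, ?_, fun v hv => vecMul_zero_mem_span n hn v hv⟩
  -- rank computation
  have hker : LinearMap.ker ((Matrix.transpose (Smat n)).mulVecLin)
      = Submodule.span ℝ (Set.range fun r : Fin 3 => Zmat n r) := by
    apply le_antisymm
    · intro v hvk
      have hv : Matrix.vecMul v (Smat n) = 0 := by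
        have := LinearMap.mem_ker.mp hvk
        rwa [Matrix.mulVecLin_apply, Matrix.mulVec_transpose] at this
      obtain ⟨c, hc⟩ := vecMul_zero_mem_span n hn v hv
      rw [hc]
      exact Submodule.sum_mem _ fun r _ =>
        Submodule.smul_mem _ _ (Submodule.subset_span ⟨r, rfl⟩)
    · rw [Submodule.span_le]
      rintro _ ⟨r, rfl⟩
      rw [SetLike.mem_coe, LinearMap.mem_ker, Matrix.mulVecLin_apply,
        Matrix.mulVec_transpose]
      exact Zrow_vecMul n r
  have hrankT : (Matrix.transpose (Smat n)).rank + 3 = 3*n+3 := by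
    have hadd := LinearMap.finrank_range_add_finrank_ker ((Matrix.transpose (Smat n)).mulVecLin)
    rw [hker] at hadd
    rw [finrank_span_eq_card hLI] at hadd
    rw [Module.finrank_fin_fun] at hadd
    simpa [Matrix.rank, Fintype.card_fin] using hadd
  have := Matrix.rank_transpose (Smat n)
  omega

end Phos
end

section
/- One has S·E = 0, the 3n columns of E form a basis of the kernel of S, and the columns of E generate the pointed polyhedral cone ker(S) ∩ ℝ_{≥0}^{6n}, i.e., ker(S) ∩ ℝ_{≥0}^{6n} = { Eλ : λ ∈ ℝ_{≥0}^{3n} }. Moreover, the strictly positive vectors in ker(S) are exactly the vectors Eλ with λ ∈ ℝ_{>0}^{3n}. -/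
open Finset

namespace Phos


lemma e_zero {N : ℕ} (j : ℕ) (m : Fin N) (h : (m:ℕ)+1 ≠ j) : e N j m = 0 := if_neg h
lemma e_one {N : ℕ} (j : ℕ) (m : Fin N) (h : (m:ℕ)+1 = j) : e N j m = 1 := if_pos h

section aux
variable {n : ℕ}

lemma Smat_k0 (m : Fin (3*n+3)) (q : ℕ) (hq : q < n) :
    Smat n m ⟨6*q, by omega⟩ =
      (e (3*n+3) (3*q+4) - e (3*n+3) 1 - e (3*n+3) (3*q+2)) m := by
  have h1 : 1+3*((6*q)/6+1) = 3*q+4 := by omega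
  have h2 : 3*((6*q)/6+1)-1 = 3*q+2 := by omega
  have h3 : (⟨(6*q) % 6, Nat.mod_lt _ (by norm_num)⟩ : Fin 6) = ⟨0, by norm_num⟩ :=
    Fin.mk_eq_mk.mpr (by omega)
  simp only [Smat, Matrix.of_apply]
  rw [h3, h1, h2]
  rfl

lemma Smat_k1 (m : Fin (3*n+3)) (q : ℕ) (hq : q < n) :
    Smat n m ⟨6*q+1, by omega⟩ =
      (e (3*n+3) 1 + e (3*n+3) (3*q+2) - e (3*n+3) (3*q+4)) m := by
  have h1 : 1+3*((6*q+1)/6+1) = 3*q+4 := by omega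
  have h2 : 3*((6*q+1)/6+1)-1 = 3*q+2 := by omega
  have h3 : (⟨(6*q+1) % 6, Nat.mod_lt _ (by norm_num)⟩ : Fin 6) = ⟨1, by norm_num⟩ :=
    Fin.mk_eq_mk.mpr (by omega)
  simp only [Smat, Matrix.of_apply]
  rw [h3, h1, h2]
  rfl

lemma Smat_k2 (m : Fin (3*n+3)) (q : ℕ) (hq : q < n) :
    Smat n m ⟨6*q+2, by omega⟩ =
      (e (3*n+3) 1 + e (3*n+3) (3*q+5) - e (3*n+3) (3*q+4)) m := by
  have h1 : 1+3*((6*q+2)/6+1) = 3*q+4 := by omega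
  have h2 : 2+3*((6*q+2)/6+1) = 3*q+5 := by omega
  have h3 : (⟨(6*q+2) % 6, Nat.mod_lt _ (by norm_num)⟩ : Fin 6) = ⟨2, by norm_num⟩ :=
    Fin.mk_eq_mk.mpr (by omega)
  simp only [Smat, Matrix.of_apply]
  rw [h3, h1, h2]
  rfl

lemma Smat_k3 (m : Fin (3*n+3)) (q : ℕ) (hq : q < n) :
    Smat n m ⟨6*q+3, by omega⟩ =
      (e (3*n+3) (3*q+6) - e (3*n+3) 3 - e (3*n+3) (3*q+5)) m := by
  have h1 : 3+3*((6*q+3)/6+1) = 3*q+6 := by omega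
  have h2 : 2+3*((6*q+3)/6+1) = 3*q+5 := by omega
  have h3 : (⟨(6*q+3) % 6, Nat.mod_lt _ (by norm_num)⟩ : Fin 6) = ⟨3, by norm_num⟩ :=
    Fin.mk_eq_mk.mpr (by omega)
  simp only [Smat, Matrix.of_apply]
  rw [h3, h1, h2]
  rfl

lemma Smat_k4 (m : Fin (3*n+3)) (q : ℕ) (hq : q < n) :
    Smat n m ⟨6*q+4, by omega⟩ =
      (e (3*n+3) 3 + e (3*n+3) (3*q+5) - e (3*n+3) (3*q+6)) m := by
  have h1 : 3+3*((6*q+4)/6+1) = 3*q+6 := by omega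
  have h2 : 2+3*((6*q+4)/6+1) = 3*q+5 := by omega
  have h3 : (⟨(6*q+4) % 6, Nat.mod_lt _ (by norm_num)⟩ : Fin 6) = ⟨4, by norm_num⟩ :=
    Fin.mk_eq_mk.mpr (by omega)
  simp only [Smat, Matrix.of_apply]
  rw [h3, h1, h2]
  rfl

lemma Smat_k5 (m : Fin (3*n+3)) (q : ℕ) (hq : q < n) :
    Smat n m ⟨6*q+5, by omega⟩ =
      (e (3*n+3) 3 + e (3*n+3) (3*q+2) - e (3*n+3) (3*q+6)) m := by
  have h1 : 3+3*((6*q+5)/6+1) = 3*q+6 := by omega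
  have h2 : 3*((6*q+5)/6+1)-1 = 3*q+2 := by omega
  have h3 : (⟨(6*q+5) % 6, Nat.mod_lt _ (by norm_num)⟩ : Fin 6) = ⟨5, by norm_num⟩ :=
    Fin.mk_eq_mk.mpr (by omega)
  simp only [Smat, Matrix.of_apply]
  rw [h3, h1, h2]
  rfl

end aux
lemma sum_three {N : ℕ} (f : Fin N → ℝ) (a : ℕ) (h : a+2 < N) :
    ∑ r ∈ ({⟨a, by omega⟩, ⟨a+1, by omega⟩, ⟨a+2, by omega⟩} : Finset (Fin N)), f r
      = f ⟨a, by omega⟩ + f ⟨a+1, by omega⟩ + f ⟨a+2, by omega⟩ := by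
  rw [Finset.sum_insert (by simp [Fin.ext_iff]),
      Finset.sum_insert (by simp [Fin.ext_iff]), Finset.sum_singleton]
  ring

lemma sum_six' {N : ℕ} (f : Fin N → ℝ) (a b : ℕ) (h : a+2 < N) (h2 : b+2 < N)
    (hab : a+2 < b) :
    ∑ r ∈ ({⟨a, by omega⟩, ⟨a+1, by omega⟩, ⟨a+2, by omega⟩,
            ⟨b, by omega⟩, ⟨b+1, by omega⟩, ⟨b+2, by omega⟩} : Finset (Fin N)), f r
      = f ⟨a, by omega⟩ + f ⟨a+1, by omega⟩ + f ⟨a+2, by omega⟩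
        + f ⟨b, by omega⟩ + f ⟨b+1, by omega⟩ + f ⟨b+2, by omega⟩ := by
  rw [Finset.sum_insert (by simp [Fin.ext_iff] <;> omega),
      Finset.sum_insert (by simp [Fin.ext_iff] <;> omega),
      Finset.sum_insert (by simp [Fin.ext_iff] <;> omega),
      Finset.sum_insert (by simp [Fin.ext_iff] <;> omega),
      Finset.sum_insert (by simp [Fin.ext_iff] <;> omega), Finset.sum_singleton]
  ring

lemma Emat_entry {n : ℕ} (j k : ℕ) (hj : j < n) (hk : k < 6) (c : Fin (3*n))
    (hc : (c:ℕ)/3 = j) :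
    Emat n ⟨6*j+k, by omega⟩ c = E0 ⟨k, hk⟩ ⟨(c:ℕ)%3, by omega⟩ := by
  have h3 : (⟨(6*j+k) % 6, Nat.mod_lt _ (by norm_num)⟩ : Fin 6) = ⟨k, hk⟩ :=
    Fin.mk_eq_mk.mpr (by omega)
  have hr : ((⟨6*j+k, by omega⟩ : Fin (6*n)) : ℕ) = 6*j+k := rfl
  simp only [Emat, Matrix.of_apply, hr]
  rw [if_pos (by omega : (6*j+k)/6 = (c:ℕ)/3), h3]

lemma Emat_zero {n : ℕ} (r : Fin (6*n)) (c : Fin (3*n)) (h : (r:ℕ)/6 ≠ (c:ℕ)/3) :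
    Emat n r c = 0 := by
  simp only [Emat, Matrix.of_apply]
  rw [if_neg h]
lemma E0_00 : E0 ⟨0, by norm_num⟩ ⟨0, by norm_num⟩ = 1 := rfl
lemma E0_01 : E0 ⟨0, by norm_num⟩ ⟨1, by norm_num⟩ = 0 := rfl
lemma E0_02 : E0 ⟨0, by norm_num⟩ ⟨2, by norm_num⟩ = 1 := rfl
lemma E0_10 : E0 ⟨1, by norm_num⟩ ⟨0, by norm_num⟩ = 1 := rfl
lemma E0_11 : E0 ⟨1, by norm_num⟩ ⟨1, by norm_num⟩ = 0 := rfl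
lemma E0_12 : E0 ⟨1, by norm_num⟩ ⟨2, by norm_num⟩ = 0 := rfl
lemma E0_20 : E0 ⟨2, by norm_num⟩ ⟨0, by norm_num⟩ = 0 := rfl
lemma E0_21 : E0 ⟨2, by norm_num⟩ ⟨1, by norm_num⟩ = 0 := rfl
lemma E0_22 : E0 ⟨2, by norm_num⟩ ⟨2, by norm_num⟩ = 1 := rfl
lemma E0_30 : E0 ⟨3, by norm_num⟩ ⟨0, by norm_num⟩ = 0 := rfl
lemma E0_31 : E0 ⟨3, by norm_num⟩ ⟨1, by norm_num⟩ = 1 := rfl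
lemma E0_32 : E0 ⟨3, by norm_num⟩ ⟨2, by norm_num⟩ = 1 := rfl
lemma E0_40 : E0 ⟨4, by norm_num⟩ ⟨0, by norm_num⟩ = 0 := rfl
lemma E0_41 : E0 ⟨4, by norm_num⟩ ⟨1, by norm_num⟩ = 1 := rfl
lemma E0_42 : E0 ⟨4, by norm_num⟩ ⟨2, by norm_num⟩ = 0 := rfl
lemma E0_50 : E0 ⟨5, by norm_num⟩ ⟨0, by norm_num⟩ = 0 := rfl
lemma E0_51 : E0 ⟨5, by norm_num⟩ ⟨1, by norm_num⟩ = 0 := rfl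
lemma E0_52 : E0 ⟨5, by norm_num⟩ ⟨2, by norm_num⟩ = 1 := rfl

lemma sum_six {N : ℕ} (f : Fin N → ℝ) (a : ℕ) (h : a+5 < N) :
    ∑ r ∈ ({⟨a, by omega⟩, ⟨a+1, by omega⟩, ⟨a+2, by omega⟩,
            ⟨a+3, by omega⟩, ⟨a+4, by omega⟩, ⟨a+5, by omega⟩} : Finset (Fin N)), f r
      = f ⟨a, by omega⟩ + f ⟨a+1, by omega⟩ + f ⟨a+2, by omega⟩
        + f ⟨a+3, by omega⟩ + f ⟨a+4, by omega⟩ + f ⟨a+5, by omega⟩ := by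
  rw [Finset.sum_insert (by simp [Fin.ext_iff] <;> omega),
      Finset.sum_insert (by simp [Fin.ext_iff] <;> omega),
      Finset.sum_insert (by simp [Fin.ext_iff] <;> omega),
      Finset.sum_insert (by simp [Fin.ext_iff] <;> omega),
      Finset.sum_insert (by simp [Fin.ext_iff] <;> omega), Finset.sum_singleton]
  ring

lemma Emat_entry' {n : ℕ} (i k l : ℕ) (hi : i < n) (hk : k < 6) (hl : l < 3) :
    Emat n ⟨6*i+k, by omega⟩ ⟨3*i+l, by omega⟩ = E0 ⟨k, hk⟩ ⟨l, hl⟩ := by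
  have hr : ((⟨6*i+k, by omega⟩ : Fin (6*n)) : ℕ) = 6*i+k := rfl
  have hc : ((⟨3*i+l, by omega⟩ : Fin (3*n)) : ℕ) = 3*i+l := rfl
  have h3 : (⟨(6*i+k) % 6, Nat.mod_lt _ (by norm_num)⟩ : Fin 6) = ⟨k, hk⟩ :=
    Fin.mk_eq_mk.mpr (by omega)
  have h4 : (⟨(3*i+l) % 3, Nat.mod_lt _ (by norm_num)⟩ : Fin 3) = ⟨l, hl⟩ :=
    Fin.mk_eq_mk.mpr (by omega)
  simp only [Emat, Matrix.of_apply, hr, hc]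
  rw [if_pos (by omega : (6*i+k)/6 = (3*i+l)/3), h3, h4]

lemma Emat_entry0 {n : ℕ} (j : ℕ) (hj : j < n) (c : Fin (3*n)) (hc : (c:ℕ)/3 = j) :
    Emat n ⟨6*j, by omega⟩ c = E0 ⟨0, by norm_num⟩ ⟨(c:ℕ)%3, by omega⟩ := by
  rw [show (⟨6*j, by omega⟩ : Fin (6*n)) = ⟨6*j+0, by omega⟩ from Fin.mk_eq_mk.mpr (by omega)]
  exact Emat_entry j 0 hj (by norm_num) c hc

lemma SE_zero (n : ℕ) : Smat n * Emat n = 0 := by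
  ext m c
  have hc3 : (c:ℕ) < 3*n := c.isLt
  have hjn : (c:ℕ)/3 < n := by omega
  rw [Matrix.mul_apply, Matrix.zero_apply]
  have hsub : ∀ r ∈ Finset.univ, r ∉
      ({⟨6*((c:ℕ)/3), by omega⟩, ⟨6*((c:ℕ)/3)+1, by omega⟩, ⟨6*((c:ℕ)/3)+2, by omega⟩,
        ⟨6*((c:ℕ)/3)+3, by omega⟩, ⟨6*((c:ℕ)/3)+4, by omega⟩, ⟨6*((c:ℕ)/3)+5, by omega⟩} :
        Finset (Fin (6*n))) →
      Smat n m r * Emat n r c = 0 := by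
    intro r _ hr
    simp only [Finset.mem_insert, Finset.mem_singleton, Fin.ext_iff] at hr
    push_neg at hr
    rw [Emat_zero r c (by omega), mul_zero]
  rw [← Finset.sum_subset (Finset.subset_univ _) hsub, sum_six _ (6*((c:ℕ)/3)) (by omega)]
  rw [Smat_k0 m _ hjn, Smat_k1 m _ hjn, Smat_k2 m _ hjn, Smat_k3 m _ hjn,
      Smat_k4 m _ hjn, Smat_k5 m _ hjn,
      Emat_entry0 ((c:ℕ)/3) hjn c rfl,
      Emat_entry ((c:ℕ)/3) 1 hjn (by norm_num) c rfl,
      Emat_entry ((c:ℕ)/3) 2 hjn (by norm_num) c rfl,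
      Emat_entry ((c:ℕ)/3) 3 hjn (by norm_num) c rfl,
      Emat_entry ((c:ℕ)/3) 4 hjn (by norm_num) c rfl,
      Emat_entry ((c:ℕ)/3) 5 hjn (by norm_num) c rfl]
  have hl : (c:ℕ)%3 = 0 ∨ (c:ℕ)%3 = 1 ∨ (c:ℕ)%3 = 2 := by omega
  rcases hl with hl | hl | hl <;>
    [rw [show (⟨(c:ℕ)%3, by omega⟩ : Fin 3) = ⟨0, by norm_num⟩ from Fin.mk_eq_mk.mpr hl];
     rw [show (⟨(c:ℕ)%3, by omega⟩ : Fin 3) = ⟨1, by norm_num⟩ from Fin.mk_eq_mk.mpr hl];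
     rw [show (⟨(c:ℕ)%3, by omega⟩ : Fin 3) = ⟨2, by norm_num⟩ from Fin.mk_eq_mk.mpr hl]] <;>
  simp only [E0_00, E0_01, E0_02, E0_10, E0_11, E0_12, E0_20, E0_21, E0_22,
             E0_30, E0_31, E0_32, E0_40, E0_41, E0_42, E0_50, E0_51, E0_52,
             Pi.add_apply, Pi.sub_apply] <;>
  ring
lemma Emat_entry'0 {n : ℕ} (i k : ℕ) (hi : i < n) (hk : k < 6) :
    Emat n ⟨6*i+k, by omega⟩ ⟨3*i, by omega⟩ = E0 ⟨k, hk⟩ ⟨0, by norm_num⟩ := by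
  rw [show (⟨3*i, by omega⟩ : Fin (3*n)) = ⟨3*i+0, by omega⟩ from Fin.mk_eq_mk.mpr (by omega)]
  exact Emat_entry' i k 0 hi hk (by norm_num)

lemma Emul {n : ℕ} (lam : Fin (3*n) → ℝ) (i k : ℕ) (hi : i < n) (hk : k < 6) :
    (Emat n).mulVec lam ⟨6*i+k, by omega⟩ =
      E0 ⟨k, hk⟩ ⟨0, by norm_num⟩ * lam ⟨3*i, by omega⟩
      + E0 ⟨k, hk⟩ ⟨1, by norm_num⟩ * lam ⟨3*i+1, by omega⟩
      + E0 ⟨k, hk⟩ ⟨2, by norm_num⟩ * lam ⟨3*i+2, by omega⟩ := by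
  have hrv : ((⟨6*i+k, by omega⟩ : Fin (6*n)) : ℕ) = 6*i+k := rfl
  have hsub : ∀ c ∈ Finset.univ, c ∉
      ({⟨3*i, by omega⟩, ⟨3*i+1, by omega⟩, ⟨3*i+2, by omega⟩} : Finset (Fin (3*n))) →
      Emat n ⟨6*i+k, by omega⟩ c * lam c = 0 := by
    intro c _ hc
    simp only [Finset.mem_insert, Finset.mem_singleton, Fin.ext_iff] at hc
    push_neg at hc
    rw [Emat_zero _ c (by rw [hrv]; omega), zero_mul]
  simp only [Matrix.mulVec, dotProduct]
  rw [← Finset.sum_subset (Finset.subset_univ _) hsub, sum_three _ (3*i) (by omega)]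
  rw [Emat_entry'0 i k hi hk, Emat_entry' i k 1 hi hk (by norm_num),
      Emat_entry' i k 2 hi hk (by norm_num)]

set_option maxHeartbeats 1000000 in
lemma Smat_zero' {n : ℕ} (m : Fin (3*n+3)) (q k : ℕ) (hq : q < n) (hk : k < 6)
    (h1 : (m:ℕ)+1 ≠ 1 ∨ 3 ≤ k) (h3 : (m:ℕ)+1 ≠ 3 ∨ k < 3)
    (hA : (m:ℕ)+1 ≠ 3*q+2 ∨ k = 2 ∨ k = 3 ∨ k = 4)
    (hB : (m:ℕ)+1 ≠ 3*q+4 ∨ 3 ≤ k)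
    (hC : (m:ℕ)+1 ≠ 3*q+5 ∨ k = 0 ∨ k = 1 ∨ k = 5)
    (hD : (m:ℕ)+1 ≠ 3*q+6 ∨ k < 3) :
    Smat n m ⟨6*q+k, by omega⟩ = 0 := by
  interval_cases k
  · rw [show (⟨6*q+0, by omega⟩ : Fin (6*n)) = ⟨6*q, by omega⟩ from Fin.mk_eq_mk.mpr (by omega),
        Smat_k0 _ q hq]; simp only [Pi.sub_apply, Pi.add_apply]
    rw [e_zero (3*q+4) _ (by omega), e_zero 1 _ (by omega), e_zero (3*q+2) _ (by omega)]; ring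
  · rw [Smat_k1 _ q hq]; simp only [Pi.sub_apply, Pi.add_apply]
    rw [e_zero 1 _ (by omega), e_zero (3*q+2) _ (by omega), e_zero (3*q+4) _ (by omega)]; ring
  · rw [Smat_k2 _ q hq]; simp only [Pi.sub_apply, Pi.add_apply]
    rw [e_zero 1 _ (by omega), e_zero (3*q+5) _ (by omega), e_zero (3*q+4) _ (by omega)]; ring
  · rw [Smat_k3 _ q hq]; simp only [Pi.sub_apply, Pi.add_apply]
    rw [e_zero (3*q+6) _ (by omega), e_zero 3 _ (by omega), e_zero (3*q+5) _ (by omega)]; ring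
  · rw [Smat_k4 _ q hq]; simp only [Pi.sub_apply, Pi.add_apply]
    rw [e_zero 3 _ (by omega), e_zero (3*q+5) _ (by omega), e_zero (3*q+6) _ (by omega)]; ring
  · rw [Smat_k5 _ q hq]; simp only [Pi.sub_apply, Pi.add_apply]
    rw [e_zero 3 _ (by omega), e_zero (3*q+2) _ (by omega), e_zero (3*q+6) _ (by omega)]; ring
set_option maxHeartbeats 1600000 in
lemma rowA_eq {n : ℕ} (v : Fin (6*n) → ℝ) (i : ℕ) (hi : i < n) :
    (Smat n).mulVec v ⟨3*i+3, by omega⟩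
      = v ⟨6*i, by omega⟩ - v ⟨6*i+1, by omega⟩ - v ⟨6*i+2, by omega⟩ := by
  have hm : ((⟨3*i+3, by omega⟩ : Fin (3*n+3)) : ℕ) = 3*i+3 := rfl
  have hsub : ∀ r ∈ Finset.univ, r ∉
      ({⟨6*i, by omega⟩, ⟨6*i+1, by omega⟩, ⟨6*i+2, by omega⟩} : Finset (Fin (6*n))) →
      Smat n ⟨3*i+3, by omega⟩ r * v r = 0 := by
    intro r _ hr
    obtain ⟨q, k, hq, hk, rfl⟩ : ∃ q k, ∃ (_ : q < n) (_ : k < 6), r = ⟨6*q+k, by omega⟩ :=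
      ⟨(r:ℕ)/6, (r:ℕ)%6, by omega, by omega,
        Fin.ext (by show (r:ℕ) = 6*((r:ℕ)/6)+(r:ℕ)%6; omega)⟩
    have hrv : ((⟨6*q+k, by omega⟩ : Fin (6*n)) : ℕ) = 6*q+k := rfl
    simp only [Finset.mem_insert, Finset.mem_singleton, Fin.ext_iff, hrv] at hr
    push_neg at hr
    rw [Smat_zero' _ q k hq hk (by rw [hm]; omega) (by rw [hm]; omega) (by rw [hm]; omega)
        (by rw [hm]; omega) (by rw [hm]; omega) (by rw [hm]; omega), zero_mul]
  simp only [Matrix.mulVec, dotProduct]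
  rw [← Finset.sum_subset (Finset.subset_univ _) hsub, sum_three _ (6*i) (by omega)]
  rw [Smat_k0 _ i hi, Smat_k1 _ i hi, Smat_k2 _ i hi]
  simp only [Pi.sub_apply, Pi.add_apply]
  rw [e_one (3*i+4) _ (by rw [hm]), e_zero 1 _ (by rw [hm]; omega),
      e_zero (3*i+2) _ (by rw [hm]; omega), e_zero (3*i+5) _ (by rw [hm]; omega)]
  ring

set_option maxHeartbeats 1600000 in
lemma rowC_eq {n : ℕ} (v : Fin (6*n) → ℝ) (i : ℕ) (hi : i < n) :
    (Smat n).mulVec v ⟨3*i+5, by omega⟩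
      = v ⟨6*i+3, by omega⟩ - v ⟨6*i+4, by omega⟩ - v ⟨6*i+5, by omega⟩ := by
  have hm : ((⟨3*i+5, by omega⟩ : Fin (3*n+3)) : ℕ) = 3*i+5 := rfl
  have hsub : ∀ r ∈ Finset.univ, r ∉
      ({⟨6*i+3, by omega⟩, ⟨6*i+3+1, by omega⟩, ⟨6*i+3+2, by omega⟩} : Finset (Fin (6*n))) →
      Smat n ⟨3*i+5, by omega⟩ r * v r = 0 := by
    intro r _ hr
    obtain ⟨q, k, hq, hk, rfl⟩ : ∃ q k, ∃ (_ : q < n) (_ : k < 6), r = ⟨6*q+k, by omega⟩ :=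
      ⟨(r:ℕ)/6, (r:ℕ)%6, by omega, by omega,
        Fin.ext (by show (r:ℕ) = 6*((r:ℕ)/6)+(r:ℕ)%6; omega)⟩
    have hrv : ((⟨6*q+k, by omega⟩ : Fin (6*n)) : ℕ) = 6*q+k := rfl
    simp only [Finset.mem_insert, Finset.mem_singleton, Fin.ext_iff, hrv] at hr
    push_neg at hr
    rw [Smat_zero' _ q k hq hk (by rw [hm]; omega) (by rw [hm]; omega) (by rw [hm]; omega)
        (by rw [hm]; omega) (by rw [hm]; omega) (by rw [hm]; omega), zero_mul]
  simp only [Matrix.mulVec, dotProduct]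
  rw [← Finset.sum_subset (Finset.subset_univ _) hsub, sum_three _ (6*i+3) (by omega)]
  rw [show (⟨6*i+3+1, by omega⟩ : Fin (6*n)) = ⟨6*i+4, by omega⟩ from Fin.mk_eq_mk.mpr (by omega),
      show (⟨6*i+3+2, by omega⟩ : Fin (6*n)) = ⟨6*i+5, by omega⟩ from Fin.mk_eq_mk.mpr (by omega)]
  rw [Smat_k3 _ i hi, Smat_k4 _ i hi, Smat_k5 _ i hi]
  simp only [Pi.sub_apply, Pi.add_apply]
  rw [e_one (3*i+6) _ (by rw [hm]), e_zero 3 _ (by rw [hm]; omega),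
      e_zero (3*i+5) _ (by rw [hm]; omega), e_zero (3*i+2) _ (by rw [hm]; omega)]
  ring

set_option maxHeartbeats 1600000 in
lemma rowB0_eq {n : ℕ} (v : Fin (6*n) → ℝ) (hn : 0 < n) :
    (Smat n).mulVec v ⟨1, by omega⟩
      = -v ⟨6*0, by omega⟩ + v ⟨6*0+1, by omega⟩ + v ⟨6*0+5, by omega⟩ := by
  have hm : ((⟨1, by omega⟩ : Fin (3*n+3)) : ℕ) = 1 := rfl
  have hsub : ∀ r ∈ Finset.univ, r ∉
      ({⟨6*0, by omega⟩, ⟨6*0+1, by omega⟩, ⟨6*0+5, by omega⟩} : Finset (Fin (6*n))) →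
      Smat n ⟨1, by omega⟩ r * v r = 0 := by
    intro r _ hr
    obtain ⟨q, k, hq, hk, rfl⟩ : ∃ q k, ∃ (_ : q < n) (_ : k < 6), r = ⟨6*q+k, by omega⟩ :=
      ⟨(r:ℕ)/6, (r:ℕ)%6, by omega, by omega,
        Fin.ext (by show (r:ℕ) = 6*((r:ℕ)/6)+(r:ℕ)%6; omega)⟩
    have hrv : ((⟨6*q+k, by omega⟩ : Fin (6*n)) : ℕ) = 6*q+k := rfl
    simp only [Finset.mem_insert, Finset.mem_singleton, Fin.ext_iff, hrv] at hr
    push_neg at hr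
    rw [Smat_zero' _ q k hq hk (by rw [hm]; omega) (by rw [hm]; omega) (by rw [hm]; omega)
        (by rw [hm]; omega) (by rw [hm]; omega) (by rw [hm]; omega), zero_mul]
  simp only [Matrix.mulVec, dotProduct]
  rw [← Finset.sum_subset (Finset.subset_univ _) hsub,
      Finset.sum_insert (by simp [Fin.ext_iff] <;> omega),
      Finset.sum_insert (by simp [Fin.ext_iff] <;> omega), Finset.sum_singleton]
  rw [Smat_k0 _ 0 hn, Smat_k1 _ 0 hn, Smat_k5 _ 0 hn]
  simp only [Pi.sub_apply, Pi.add_apply]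
  rw [e_one (3*0+2) _ (by rw [hm]), e_zero 1 _ (by rw [hm]; omega),
      e_zero 3 _ (by rw [hm]; omega), e_zero (3*0+4) _ (by rw [hm]; omega),
      e_zero (3*0+6) _ (by rw [hm]; omega)]
  ring

set_option maxHeartbeats 1600000 in
lemma rowB_eq {n : ℕ} (v : Fin (6*n) → ℝ) (j : ℕ) (hj : j+1 < n) :
    (Smat n).mulVec v ⟨3*j+4, by omega⟩
      = v ⟨6*j+2, by omega⟩ - v ⟨6*j+3, by omega⟩ + v ⟨6*j+4, by omega⟩
        - v ⟨6*(j+1), by omega⟩ + v ⟨6*(j+1)+1, by omega⟩ + v ⟨6*(j+1)+5, by omega⟩ := by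
  have hm : ((⟨3*j+4, by omega⟩ : Fin (3*n+3)) : ℕ) = 3*j+4 := rfl
  have hsub : ∀ r ∈ Finset.univ, r ∉
      ({⟨6*j+2, by omega⟩, ⟨6*j+3, by omega⟩, ⟨6*j+4, by omega⟩, ⟨6*(j+1), by omega⟩,
        ⟨6*(j+1)+1, by omega⟩, ⟨6*(j+1)+5, by omega⟩} : Finset (Fin (6*n))) →
      Smat n ⟨3*j+4, by omega⟩ r * v r = 0 := by
    intro r _ hr
    obtain ⟨q, k, hq, hk, rfl⟩ : ∃ q k, ∃ (_ : q < n) (_ : k < 6), r = ⟨6*q+k, by omega⟩ :=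
      ⟨(r:ℕ)/6, (r:ℕ)%6, by omega, by omega,
        Fin.ext (by show (r:ℕ) = 6*((r:ℕ)/6)+(r:ℕ)%6; omega)⟩
    have hrv : ((⟨6*q+k, by omega⟩ : Fin (6*n)) : ℕ) = 6*q+k := rfl
    simp only [Finset.mem_insert, Finset.mem_singleton, Fin.ext_iff, hrv] at hr
    push_neg at hr
    rw [Smat_zero' _ q k hq hk (by rw [hm]; omega) (by rw [hm]; omega) (by rw [hm]; omega)
        (by rw [hm]; omega) (by rw [hm]; omega) (by rw [hm]; omega), zero_mul]
  simp only [Matrix.mulVec, dotProduct]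
  rw [← Finset.sum_subset (Finset.subset_univ _) hsub,
      Finset.sum_insert (by simp [Fin.ext_iff] <;> omega),
      Finset.sum_insert (by simp [Fin.ext_iff] <;> omega),
      Finset.sum_insert (by simp [Fin.ext_iff] <;> omega),
      Finset.sum_insert (by simp [Fin.ext_iff] <;> omega),
      Finset.sum_insert (by simp [Fin.ext_iff] <;> omega), Finset.sum_singleton]
  rw [Smat_k2 _ j (by omega), Smat_k3 _ j (by omega), Smat_k4 _ j (by omega),
      Smat_k0 _ (j+1) hj, Smat_k1 _ (j+1) hj, Smat_k5 _ (j+1) hj]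
  simp only [Pi.sub_apply, Pi.add_apply]
  rw [e_one (3*j+5) _ (by rw [hm]), e_one (3*(j+1)+2) _ (by rw [hm]; omega),
      e_zero 1 _ (by rw [hm]; omega), e_zero 3 _ (by rw [hm]; omega),
      e_zero (3*j+4) _ (by rw [hm]; omega), e_zero (3*j+6) _ (by rw [hm]; omega),
      e_zero (3*(j+1)+4) _ (by rw [hm]; omega), e_zero (3*(j+1)+6) _ (by rw [hm]; omega)]
  ring
/-- Coefficients recovering `lam` from `v = E lam`. -/
def lamOf (n : ℕ) (v : Fin (6*n) → ℝ) : Fin (3*n) → ℝ :=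
  fun c => v ⟨6*((c:ℕ)/3) + (if (c:ℕ)%3 = 0 then 1 else if (c:ℕ)%3 = 1 then 4 else 2), by
    have := c.isLt; split_ifs <;> omega⟩

lemma lamOf0 {n : ℕ} (v : Fin (6*n) → ℝ) (i : ℕ) (hi : i < n) :
    lamOf n v ⟨3*i, by omega⟩ = v ⟨6*i+1, by omega⟩ :=
  congrArg v (Fin.mk_eq_mk.mpr (by
    show 6*((3*i)/3) + (if (3*i)%3 = 0 then 1 else if (3*i)%3 = 1 then 4 else 2) = 6*i+1
    rw [if_pos (by omega : (3*i)%3 = 0)]; omega))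

lemma lamOf1 {n : ℕ} (v : Fin (6*n) → ℝ) (i : ℕ) (hi : i < n) :
    lamOf n v ⟨3*i+1, by omega⟩ = v ⟨6*i+4, by omega⟩ :=
  congrArg v (Fin.mk_eq_mk.mpr (by
    show 6*((3*i+1)/3) + (if (3*i+1)%3 = 0 then 1 else if (3*i+1)%3 = 1 then 4 else 2) = 6*i+4
    rw [if_neg (by omega : ¬ (3*i+1)%3 = 0), if_pos (by omega : (3*i+1)%3 = 1)]; omega))

lemma lamOf2 {n : ℕ} (v : Fin (6*n) → ℝ) (i : ℕ) (hi : i < n) :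
    lamOf n v ⟨3*i+2, by omega⟩ = v ⟨6*i+2, by omega⟩ :=
  congrArg v (Fin.mk_eq_mk.mpr (by
    show 6*((3*i+2)/3) + (if (3*i+2)%3 = 0 then 1 else if (3*i+2)%3 = 1 then 4 else 2) = 6*i+2
    rw [if_neg (by omega : ¬ (3*i+2)%3 = 0), if_neg (by omega : ¬ (3*i+2)%3 = 1)]; omega))

lemma keyE6 {n : ℕ} (v : Fin (6*n) → ℝ) (hv : (Smat n).mulVec v = 0) :
    ∀ i, ∀ _ : i < n, v ⟨6*i+5, by omega⟩ = v ⟨6*i+2, by omega⟩ := by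
  intro i
  induction i with
  | zero =>
    intro hi
    have h1 := rowA_eq v 0 hi
    have h2 := rowB0_eq v hi
    rw [hv] at h1 h2
    simp only [Pi.zero_apply] at h1 h2
    have e1 : v ⟨6*0+5, by omega⟩ = v ⟨6*0+5, by omega⟩ := rfl
    linarith
  | succ j ih =>
    intro hi
    have h1 := rowA_eq v (j+1) hi
    have h2 := rowB_eq v j hi
    have h3 := rowC_eq v j (by omega)
    have h4 := ih (by omega)
    rw [hv] at h1 h2 h3
    simp only [Pi.zero_apply] at h1 h2 h3
    linarith

lemma ker_imp {n : ℕ} (v : Fin (6*n) → ℝ) (hv : (Smat n).mulVec v = 0) :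
    v = (Emat n).mulVec (lamOf n v) := by
  have eqA : ∀ i, ∀ _ : i < n, v ⟨6*i, by omega⟩ = v ⟨6*i+1, by omega⟩ + v ⟨6*i+2, by omega⟩ := by
    intro i hi
    have h := rowA_eq v i hi
    rw [hv] at h; simp only [Pi.zero_apply] at h; linarith
  have eqC : ∀ i, ∀ _ : i < n, v ⟨6*i+3, by omega⟩ = v ⟨6*i+4, by omega⟩ + v ⟨6*i+5, by omega⟩ := by
    intro i hi
    have h := rowC_eq v i hi
    rw [hv] at h; simp only [Pi.zero_apply] at h; linarith
  have eq6 := keyE6 v hv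
  funext r
  obtain ⟨i, k, hi, hk, rfl⟩ : ∃ i k, ∃ (_ : i < n) (_ : k < 6), r = ⟨6*i+k, by omega⟩ :=
    ⟨(r:ℕ)/6, (r:ℕ)%6, by omega, by omega,
      Fin.ext (by show (r:ℕ) = 6*((r:ℕ)/6)+(r:ℕ)%6; omega)⟩
  interval_cases k
  · rw [Emul (lamOf n v) i 0 hi (by norm_num), E0_00, E0_01, E0_02,
        lamOf0 v i hi, lamOf1 v i hi, lamOf2 v i hi,
        show (⟨6*i+0, by omega⟩ : Fin (6*n)) = ⟨6*i, by omega⟩ from Fin.mk_eq_mk.mpr rfl]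
    have := eqA i hi; linarith
  · rw [Emul (lamOf n v) i 1 hi (by norm_num), E0_10, E0_11, E0_12,
        lamOf0 v i hi, lamOf1 v i hi, lamOf2 v i hi]
    ring
  · rw [Emul (lamOf n v) i 2 hi (by norm_num), E0_20, E0_21, E0_22,
        lamOf0 v i hi, lamOf1 v i hi, lamOf2 v i hi]
    ring
  · rw [Emul (lamOf n v) i 3 hi (by norm_num), E0_30, E0_31, E0_32,
        lamOf0 v i hi, lamOf1 v i hi, lamOf2 v i hi]
    have h1 := eqC i hi; have h2 := eq6 i hi; linarith
  · rw [Emul (lamOf n v) i 4 hi (by norm_num), E0_40, E0_41, E0_42,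
        lamOf0 v i hi, lamOf1 v i hi, lamOf2 v i hi]
    ring
  · rw [Emul (lamOf n v) i 5 hi (by norm_num), E0_50, E0_51, E0_52,
        lamOf0 v i hi, lamOf1 v i hi, lamOf2 v i hi]
    have h2 := eq6 i hi; linarith

lemma Emul_inj {n : ℕ} (g : Fin (3*n) → ℝ) (hg : (Emat n).mulVec g = 0) : g = 0 := by
  funext c
  obtain ⟨i, l, hi, hl, rfl⟩ : ∃ i l, ∃ (_ : i < n) (_ : l < 3), c = ⟨3*i+l, by omega⟩ :=
    ⟨(c:ℕ)/3, (c:ℕ)%3, by omega, by omega,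
      Fin.ext (by show (c:ℕ) = 3*((c:ℕ)/3)+(c:ℕ)%3; omega)⟩
  interval_cases l
  · have h := congrFun hg ⟨6*i+1, by omega⟩
    rw [Emul g i 1 hi (by norm_num), E0_10, E0_11, E0_12] at h
    simp only [Pi.zero_apply] at h
    rw [show (⟨3*i+0, by omega⟩ : Fin (3*n)) = ⟨3*i, by omega⟩ from Fin.mk_eq_mk.mpr rfl]
    simp only [Pi.zero_apply]; linarith
  · have h := congrFun hg ⟨6*i+4, by omega⟩
    rw [Emul g i 4 hi (by norm_num), E0_40, E0_41, E0_42] at h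
    simp only [Pi.zero_apply] at h
    simp only [Pi.zero_apply]; linarith
  · have h := congrFun hg ⟨6*i+2, by omega⟩
    rw [Emul g i 2 hi (by norm_num), E0_20, E0_21, E0_22] at h
    simp only [Pi.zero_apply] at h
    simp only [Pi.zero_apply]; linarith

lemma Sv_of_lam {n : ℕ} (lam : Fin (3*n) → ℝ) :
    (Smat n).mulVec ((Emat n).mulVec lam) = 0 := by
  rw [Matrix.mulVec_mulVec, SE_zero, Matrix.zero_mulVec]
/-- `S·E = 0`, the columns of `E` form a basis of `ker S`,
the columns of `E` generate the cone `ker S ∩ ℝ_{≥0}^{6n}`, and the strictly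
positive vectors of `ker S` are exactly the `Eλ` with `λ ∈ ℝ_{>0}^{3n}`. -/
theorem columns_of_E_generate_kernel_cone (n : ℕ) (hn : 2 ≤ n) :
    Smat n * Emat n = 0 ∧
    LinearIndependent ℝ (fun c : Fin (3*n) => (Emat n).transpose c) ∧
    (∀ v : Fin (6*n) → ℝ,
      (Smat n).mulVec v = 0 ↔ ∃ lam : Fin (3*n) → ℝ, v = (Emat n).mulVec lam) ∧
    (∀ v : Fin (6*n) → ℝ,
      ((Smat n).mulVec v = 0 ∧ ∀ r, 0 ≤ v r) ↔
        ∃ lam : Fin (3*n) → ℝ, (∀ c, 0 ≤ lam c) ∧ v = (Emat n).mulVec lam) ∧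
    (∀ v : Fin (6*n) → ℝ,
      ((Smat n).mulVec v = 0 ∧ ∀ r, 0 < v r) ↔
        ∃ lam : Fin (3*n) → ℝ, (∀ c, 0 < lam c) ∧ v = (Emat n).mulVec lam) := by
  refine ⟨SE_zero n, ?_, ?_, ?_, ?_⟩
  · rw [Fintype.linearIndependent_iff]
    intro g hg
    have hg' : (Emat n).mulVec g = 0 := by
      funext r
      have h := congrFun hg r
      simpa [Matrix.mulVec, dotProduct, Finset.sum_apply, Pi.smul_apply,
        Matrix.transpose_apply, mul_comm] using h
    have h0 := Emul_inj g hg'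
    intro c; rw [h0]; rfl
  · intro v
    exact ⟨fun hv => ⟨lamOf n v, ker_imp v hv⟩, fun ⟨lam, hv⟩ => hv ▸ Sv_of_lam lam⟩
  · intro v
    constructor
    · rintro ⟨hv, hpos⟩
      exact ⟨lamOf n v, fun c => hpos _, ker_imp v hv⟩
    · rintro ⟨lam, hlam, rfl⟩
      refine ⟨Sv_of_lam lam, fun r => ?_⟩
      obtain ⟨i, k, hi, hk, rfl⟩ : ∃ i k, ∃ (_ : i < n) (_ : k < 6), r = ⟨6*i+k, by omega⟩ :=
        ⟨(r:ℕ)/6, (r:ℕ)%6, by omega, by omega,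
          Fin.ext (by show (r:ℕ) = 6*((r:ℕ)/6)+(r:ℕ)%6; omega)⟩
      have l0 := hlam ⟨3*i, by omega⟩
      have l1 := hlam ⟨3*i+1, by omega⟩
      have l2 := hlam ⟨3*i+2, by omega⟩
      interval_cases k
      · rw [Emul lam i 0 hi (by norm_num), E0_00, E0_01, E0_02]; linarith
      · rw [Emul lam i 1 hi (by norm_num), E0_10, E0_11, E0_12]; linarith
      · rw [Emul lam i 2 hi (by norm_num), E0_20, E0_21, E0_22]; linarith
      · rw [Emul lam i 3 hi (by norm_num), E0_30, E0_31, E0_32]; linarith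
      · rw [Emul lam i 4 hi (by norm_num), E0_40, E0_41, E0_42]; linarith
      · rw [Emul lam i 5 hi (by norm_num), E0_50, E0_51, E0_52]; linarith
  · intro v
    constructor
    · rintro ⟨hv, hpos⟩
      exact ⟨lamOf n v, fun c => hpos _, ker_imp v hv⟩
    · rintro ⟨lam, hlam, rfl⟩
      refine ⟨Sv_of_lam lam, fun r => ?_⟩
      obtain ⟨i, k, hi, hk, rfl⟩ : ∃ i k, ∃ (_ : i < n) (_ : k < 6), r = ⟨6*i+k, by omega⟩ :=
        ⟨(r:ℕ)/6, (r:ℕ)%6, by omega, by omega,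
          Fin.ext (by show (r:ℕ) = 6*((r:ℕ)/6)+(r:ℕ)%6; omega)⟩
      have l0 := hlam ⟨3*i, by omega⟩
      have l1 := hlam ⟨3*i+1, by omega⟩
      have l2 := hlam ⟨3*i+2, by omega⟩
      interval_cases k
      · rw [Emul lam i 0 hi (by norm_num), E0_00, E0_01, E0_02]; linarith
      · rw [Emul lam i 1 hi (by norm_num), E0_10, E0_11, E0_12]; linarith
      · rw [Emul lam i 2 hi (by norm_num), E0_20, E0_21, E0_22]; linarith
      · rw [Emul lam i 3 hi (by norm_num), E0_30, E0_31, E0_32]; linarith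
      · rw [Emul lam i 4 hi (by norm_num), E0_40, E0_41, E0_42]; linarith
      · rw [Emul lam i 5 hi (by norm_num), E0_50, E0_51, E0_52]; linarith

end Phos
end

section
/- Let a ∈ ℝ_{>0}^{3+3n} and λ ∈ ℝ_{>0}^{3n}. Then b ∈ ℝ_{>0}^{3+3n} is a positive steady state of ẋ = S diag(κ(a,λ)) Φ(x) if and only if ln b − ln a lies in the column space of L, equivalently, if and only if there exists g ∈ ℝ_{>0}^3 with b = diag(g^L) a, i.e., b_j = (g^L)_j a_j for all j = 1,…,3+3n. -/
open Finset

/-!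
With `κ = κ(a, λ)` the flux of reaction `r` at `b` is `(Eλ)_r Φ(b / a)_r`, so `b` is a steady
state iff `t = b / a` is one for the rate constants `Eλ`. The rows of `S` at the two complexes of
each block, and at the substrates `S_k` (which telescope along the chain `S₀ → ⋯ → Sₙ`), show
that, as `λ > 0`, this happens iff `t` solves the binomial equations
`t_E t_{S_i} = t_{ES_i} = t_{FS_{i+1}} = t_F t_{S_{i+1}}`. Their solutions are determined by
`t_E`, `t_F`, `t_{S₀}`, because `t_{S_{i+1}} = (t_E / t_F) t_{S_i}`; the vectors `g^L` solve them
and take arbitrary positive values at `E`, `F`, `S₀`. Taking logarithms turns `t = g^L` into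
`ln t ∈ im L`.
-/

namespace Phos

open scoped Matrix

lemma path_flow_eq_zero {n : ℕ} {M : Type*} [AddCommMonoid M] (w : Fin n → M)
    (h : ∀ k : Fin (n+1), ∑ i, (if i.succ = k then w i else 0) =
      ∑ i, (if i.castSucc = k then w i else 0)) : w = 0 := by
  funext i
  induction i using WellFoundedLT.induction with
  | _ i ih =>
    have hin : ∑ j, (if j.succ = i.castSucc then w j else 0) = 0 :=
      Finset.sum_eq_zero fun j _ => by
        split_ifs with hj
        · rw [Fin.ext_iff, Fin.val_succ, Fin.val_castSucc] at hj
          exact ih j (by omega)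
        · rfl
    simpa [hin] using (h i.castSucc).symm

section

variable {n : ℕ}

def blockIdx (k : ℕ) (i : Fin n) (s : Fin k) : Fin (k * n) :=
  finCongr (Nat.mul_comm n k) (finProdFinEquiv (i, s))

lemma blockIdx_val (k : ℕ) (i : Fin n) (s : Fin k) : (blockIdx k i s : ℕ) = s + k * i := rfl

lemma sum_blockIdx {M : Type*} [AddCommMonoid M] (k : ℕ) (f : Fin (k * n) → M) :
    ∑ r, f r = ∑ i, ∑ s, f (blockIdx k i s) := by
  rw [← Fintype.sum_prod_type', ← (finProdFinEquiv.trans (finCongr (Nat.mul_comm n k))).sum_comp]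
  rfl

lemma blockIdx_div (k : ℕ) (i : Fin n) (s : Fin k) : (blockIdx k i s : ℕ) / k = i := by
  rw [blockIdx_val, Nat.add_mul_div_left _ _ s.pos, Nat.div_eq_of_lt s.isLt, zero_add]

lemma blockIdx_mod (k : ℕ) (i : Fin n) (s : Fin k) : (blockIdx k i s : ℕ) % k = s := by
  rw [blockIdx_val, Nat.add_mul_mod_self_left, Nat.mod_eq_of_lt s.isLt]

local notation "rxn" => blockIdx 6

/- The species, indexed from `0`: the kinase `E`, the phosphatase `F`, the substrates `S_k`
(`k = 0, …, n`), and in block `i : Fin n` (the paper's block `i + 1`, whose reactions are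
`rxn i 0, …, rxn i 5`) the complexes `E·S_i` and `F·S_{i+1}`. -/
def spE : Fin (3*n+3) := ⟨0, by omega⟩
def spF : Fin (3*n+3) := ⟨2, by omega⟩
def spS (k : Fin (n+1)) : Fin (3*n+3) := ⟨3*k+1, by omega⟩
def spES (i : Fin n) : Fin (3*n+3) := ⟨3*i+3, by omega⟩
def spFS (i : Fin n) : Fin (3*n+3) := ⟨3*i+5, by omega⟩

@[elab_as_elim]
lemma species_cases {P : Fin (3*n+3) → Prop} (hE : P spE) (hF : P spF) (hS : ∀ k, P (spS k))
    (hES : ∀ i, P (spES i)) (hFS : ∀ i, P (spFS i)) (m : Fin (3*n+3)) : P m := by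
  obtain ⟨m, hm⟩ := m
  obtain ⟨q, rfl | rfl | rfl⟩ : ∃ q, m = 3*q ∨ m = 3*q+1 ∨ m = 3*q+2 := ⟨m/3, by omega⟩
  · rcases q with _ | q
    · exact hE
    · exact hES ⟨q, by omega⟩
  · exact hS ⟨q, by omega⟩
  · rcases q with _ | q
    · exact hF
    · exact hFS ⟨q, by omega⟩

lemma Smat_rxn (m : Fin (3*n+3)) (i : Fin n) (s : Fin 6) :
    Smat n m (rxn i s) =
      ![e (3*n+3) (3*i+4) m - e (3*n+3) 1 m - e (3*n+3) (3*i+2) m,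
        e (3*n+3) 1 m + e (3*n+3) (3*i+2) m - e (3*n+3) (3*i+4) m,
        e (3*n+3) 1 m + e (3*n+3) (3*i+5) m - e (3*n+3) (3*i+4) m,
        e (3*n+3) (3*i+6) m - e (3*n+3) 3 m - e (3*n+3) (3*i+5) m,
        e (3*n+3) 3 m + e (3*n+3) (3*i+5) m - e (3*n+3) (3*i+6) m,
        e (3*n+3) 3 m + e (3*n+3) (3*i+2) m - e (3*n+3) (3*i+6) m] s := by
  have hs : (⟨(rxn i s : ℕ) % 6, Nat.mod_lt _ (by norm_num)⟩ : Fin 6) = s :=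
    Fin.ext (blockIdx_mod 6 i s)
  have h2 : 3 * ((i : ℕ) + 1) - 1 = 3 * i + 2 := by omega
  simp only [Smat, Matrix.of_apply, blockIdx_div, hs, h2]
  fin_cases s <;>
    simp only [Fin.zero_eta, Fin.mk_one, Fin.reduceFinMk, Fin.isValue, Matrix.cons_val_zero,
      Matrix.cons_val_one, Matrix.cons_val, Pi.add_apply, Pi.sub_apply] <;>
    ring_nf

lemma e_of_eq {N j : ℕ} {m : Fin N} (h : (m : ℕ) + 1 = j) : e N j m = 1 := if_pos h

lemma e_of_ne {N j : ℕ} {m : Fin N} (h : (m : ℕ) + 1 ≠ j) : e N j m = 0 := if_neg h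

lemma Smat_spE (i : Fin n) (s : Fin 6) : Smat n spE (rxn i s) = ![-1, 1, 1, 0, 0, 0] s := by
  -- `hm` (here and below) exposes the species index to the `omega` discharger.
  have hm : (spE : Fin (3*n+3)).val = 0 := rfl
  rw [Smat_rxn]
  fin_cases s <;> simp (disch := omega) only [e_of_eq, e_of_ne] <;> norm_num

lemma Smat_spF (i : Fin n) (s : Fin 6) : Smat n spF (rxn i s) = ![0, 0, 0, -1, 1, 1] s := by
  have hm : (spF : Fin (3*n+3)).val = 2 := rfl
  rw [Smat_rxn]
  fin_cases s <;> simp (disch := omega) only [e_of_eq, e_of_ne] <;> norm_num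

lemma Smat_spS (k : Fin (n+1)) (i : Fin n) (s : Fin 6) :
    Smat n (spS k) (rxn i s) =
      (if i.castSucc = k then ![-1, 1, 0, 0, 0, 1] s else 0) +
        (if i.succ = k then ![0, 0, 1, -1, 1, 0] s else 0) := by
  have hm : (spS k : ℕ) = 3 * k + 1 := rfl
  have hk : i.castSucc = k ↔ (i : ℕ) = k := Fin.ext_iff
  have hk' : i.succ = k ↔ (i : ℕ) + 1 = k := Fin.ext_iff
  rw [Smat_rxn]
  simp only [hk, hk']
  split_ifs <;> fin_cases s <;>
    simp (disch := omega) only [e_of_eq, e_of_ne] <;> norm_num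

lemma Smat_spES (i' i : Fin n) (s : Fin 6) :
    Smat n (spES i') (rxn i s) = if i = i' then ![1, -1, -1, 0, 0, 0] s else 0 := by
  have hm : (spES i' : ℕ) = 3 * i' + 3 := rfl
  have hi : i = i' ↔ (i : ℕ) = i' := Fin.ext_iff
  rw [Smat_rxn]
  split_ifs with h <;> rw [hi] at h <;> fin_cases s <;>
    simp (disch := omega) only [e_of_eq, e_of_ne] <;> norm_num

lemma Smat_spFS (i' i : Fin n) (s : Fin 6) :
    Smat n (spFS i') (rxn i s) = if i = i' then ![0, 0, 0, 1, -1, -1] s else 0 := by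
  have hm : (spFS i' : ℕ) = 3 * i' + 5 := rfl
  have hi : i = i' ↔ (i : ℕ) = i' := Fin.ext_iff
  rw [Smat_rxn]
  split_ifs with h <;> rw [hi] at h <;> fin_cases s <;>
    simp (disch := omega) only [e_of_eq, e_of_ne] <;> norm_num

lemma Smat_mulVec_apply (v : Fin (6*n) → ℝ) (m : Fin (3*n+3)) :
    (Smat n *ᵥ v) m = ∑ i, ∑ s, Smat n m (rxn i s) * v (rxn i s) :=
  sum_blockIdx 6 _

lemma Smat_mulVec_spE (v : Fin (6*n) → ℝ) :
    (Smat n *ᵥ v) spE = ∑ i, (-v (rxn i 0) + v (rxn i 1) + v (rxn i 2)) := by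
  simp [Smat_mulVec_apply, Smat_spE, Fin.sum_univ_six]

lemma Smat_mulVec_spF (v : Fin (6*n) → ℝ) :
    (Smat n *ᵥ v) spF = ∑ i, (-v (rxn i 3) + v (rxn i 4) + v (rxn i 5)) := by
  simp [Smat_mulVec_apply, Smat_spF, Fin.sum_univ_six]

lemma Smat_mulVec_spS (v : Fin (6*n) → ℝ) (k : Fin (n+1)) :
    (Smat n *ᵥ v) (spS k) = ∑ i,
      ((if i.castSucc = k then -v (rxn i 0) + v (rxn i 1) + v (rxn i 5) else 0) +
        (if i.succ = k then v (rxn i 2) - v (rxn i 3) + v (rxn i 4) else 0)) := by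
  simp only [Smat_mulVec_apply, Smat_spS, Fin.sum_univ_six, Matrix.cons_val_zero,
    Matrix.cons_val_one, Matrix.cons_val]
  congr! 1 with i
  split_ifs <;> ring

lemma Smat_mulVec_spES (v : Fin (6*n) → ℝ) (i : Fin n) :
    (Smat n *ᵥ v) (spES i) = v (rxn i 0) - v (rxn i 1) - v (rxn i 2) := by
  simp only [Smat_mulVec_apply, Smat_spES, ite_mul, zero_mul, Finset.sum_ite_irrel,
    Finset.sum_const_zero, Finset.sum_ite_eq', Finset.mem_univ, if_true, Fin.sum_univ_six,
    Matrix.cons_val_zero, Matrix.cons_val_one, Matrix.cons_val]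
  ring

lemma Smat_mulVec_spFS (v : Fin (6*n) → ℝ) (i : Fin n) :
    (Smat n *ᵥ v) (spFS i) = v (rxn i 3) - v (rxn i 4) - v (rxn i 5) := by
  simp only [Smat_mulVec_apply, Smat_spFS, ite_mul, zero_mul, Finset.sum_ite_irrel,
    Finset.sum_const_zero, Finset.sum_ite_eq', Finset.mem_univ, if_true, Fin.sum_univ_six,
    Matrix.cons_val_zero, Matrix.cons_val_one, Matrix.cons_val]
  ring

lemma prod_pow_eN {N : ℕ} (x : Fin N → ℝ) (j : Fin N) : ∏ m, x m ^ eN N (j + 1) m = x j := by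
  rw [Fintype.prod_eq_single j fun m hm => by simp [eN, Fin.val_inj, hm]]
  simp [eN]

lemma Phi_rxn (x : Fin (3*n+3) → ℝ) (i : Fin n) (s : Fin 6) :
    Phi n x (rxn i s) = ![x spE * x (spS i.castSucc), x (spES i), x (spES i),
      x spF * x (spS i.succ), x (spFS i), x (spFS i)] s := by
  have hs : (⟨(rxn i s : ℕ) % 6, Nat.mod_lt _ (by norm_num)⟩ : Fin 6) = s :=
    Fin.ext (blockIdx_mod 6 i s)
  have hES : 1 + 3 * ((i : ℕ) + 1) = spES i + 1 := by simp only [spES]; omega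
  have hS : 3 * ((i : ℕ) + 1) - 1 = spS i.castSucc + 1 := by
    simp only [spS, Fin.val_castSucc]; omega
  have hS' : 2 + 3 * ((i : ℕ) + 1) = spS i.succ + 1 := by simp only [spS, Fin.val_succ]; omega
  have hFS : 3 + 3 * ((i : ℕ) + 1) = spFS i + 1 := by simp only [spFS]; omega
  have hE : ∏ m, x m ^ eN (3*n+3) 1 m = x spE := prod_pow_eN x spE
  have hF : ∏ m, x m ^ eN (3*n+3) 3 m = x spF := prod_pow_eN x spF
  simp only [Phi, Ymat, Matrix.of_apply, blockIdx_div, hs, hES, hS, hS', hFS]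
  fin_cases s <;> simp [pow_add, Finset.prod_mul_distrib, prod_pow_eN, hE, hF]

lemma Phi_div (x y : Fin (3*n+3) → ℝ) : Phi n (x / y) = Phi n x / Phi n y := by
  funext r
  simp [Phi, div_pow, Finset.prod_div_distrib]

lemma Emat_rxn_blockIdx (i j : Fin n) (s : Fin 6) (c : Fin 3) :
    Emat n (rxn i s) (blockIdx 3 j c) = if i = j then E0 s c else 0 := by
  have hs : (⟨(rxn i s : ℕ) % 6, Nat.mod_lt _ (by norm_num)⟩ : Fin 6) = s :=
    Fin.ext (blockIdx_mod 6 i s)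
  have hc : (⟨(blockIdx 3 j c : ℕ) % 3, Nat.mod_lt _ (by norm_num)⟩ : Fin 3) = c :=
    Fin.ext (blockIdx_mod 3 j c)
  simp only [Emat, Matrix.of_apply, blockIdx_div, hs, hc, Fin.val_inj]

lemma Emat_mulVec_rxn (lam : Fin (3*n) → ℝ) (i : Fin n) (s : Fin 6) :
    (Emat n *ᵥ lam) (rxn i s) = ∑ c, E0 s c * lam (blockIdx 3 i c) := by
  simp [Matrix.mulVec, dotProduct, sum_blockIdx 3, Emat_rxn_blockIdx]

lemma Emat_mulVec_mul_Phi_rxn (lam : Fin (3*n) → ℝ) (t : Fin (3*n+3) → ℝ) (i : Fin n)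
    (s : Fin 6) :
    (Emat n *ᵥ lam) (rxn i s) * Phi n t (rxn i s) =
      ![(lam (blockIdx 3 i 0) + lam (blockIdx 3 i 2)) * (t spE * t (spS i.castSucc)),
        lam (blockIdx 3 i 0) * t (spES i), lam (blockIdx 3 i 2) * t (spES i),
        (lam (blockIdx 3 i 1) + lam (blockIdx 3 i 2)) * (t spF * t (spS i.succ)),
        lam (blockIdx 3 i 1) * t (spFS i), lam (blockIdx 3 i 2) * t (spFS i)] s := by
  rw [Emat_mulVec_rxn, Phi_rxn]
  fin_cases s <;> simp [Fin.sum_univ_three, E0]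

lemma isSteady_kappaOf_iff (a : Fin (3*n+3) → ℝ) (lam : Fin (3*n) → ℝ) (b : Fin (3*n+3) → ℝ) :
    isSteady n (kappaOf n a lam) b ↔ isSteady n (Emat n *ᵥ lam) (b / a) := by
  have hflux : (fun r => kappaOf n a lam r * Phi n b r) =
      fun r => (Emat n *ᵥ lam) r * Phi n (b / a) r := by
    funext r
    rw [Phi_div, kappaOf, Pi.div_apply, div_mul_eq_mul_div, mul_div_assoc]
  rw [isSteady, isSteady, hflux]

structure BinomialEqs (n : ℕ) (t : Fin (3*n+3) → ℝ) : Prop where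
  es : ∀ i, t spE * t (spS i.castSucc) = t (spES i)
  fs : ∀ i, t spF * t (spS i.succ) = t (spFS i)
  es_eq_fs : ∀ i, t (spES i) = t (spFS i)

lemma BinomialEqs.isSteady {t : Fin (3*n+3) → ℝ} (ht : BinomialEqs n t) (lam : Fin (3*n) → ℝ) :
    isSteady n (Emat n *ᵥ lam) t := by
  funext m
  induction m using species_cases <;>
    simp only [Smat_mulVec_spE, Smat_mulVec_spF, Smat_mulVec_spS, Smat_mulVec_spES,
      Smat_mulVec_spFS, Emat_mulVec_mul_Phi_rxn, ht.es, ht.fs, ht.es_eq_fs, Matrix.cons_val_zero,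
      Matrix.cons_val_one, Matrix.cons_val, Pi.zero_apply]
  all_goals first
    | exact Finset.sum_eq_zero fun i _ => by (try split_ifs) <;> ring
    | ring

lemma binomialEqs_of_isSteady {lam : Fin (3*n) → ℝ} (hlam : ∀ c, 0 < lam c)
    {t : Fin (3*n+3) → ℝ} (h : isSteady n (Emat n *ᵥ lam) t) : BinomialEqs n t := by
  have hl := fun i c => hlam (blockIdx 3 i c)
  have hm := congrFun h
  have hes : ∀ i, t spE * t (spS i.castSucc) = t (spES i) := fun i => by
    have := hm (spES i)
    simp only [Smat_mulVec_spES, Emat_mulVec_mul_Phi_rxn, Matrix.cons_val_zero,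
      Matrix.cons_val_one, Matrix.cons_val, Pi.zero_apply] at this
    exact mul_left_cancel₀ (add_pos (hl i 0) (hl i 2)).ne' (by linear_combination this)
  have hfs : ∀ i, t spF * t (spS i.succ) = t (spFS i) := fun i => by
    have := hm (spFS i)
    simp only [Smat_mulVec_spFS, Emat_mulVec_mul_Phi_rxn, Matrix.cons_val, Pi.zero_apply] at this
    exact mul_left_cancel₀ (add_pos (hl i 1) (hl i 2)).ne' (by linear_combination this)
  -- Given `hes` and `hfs`, block `i` moves `λ₃ (t_{ES_i} - t_{FS_i})` from `S_i` to `S_{i+1}`.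
  have hflow := path_flow_eq_zero (fun i => lam (blockIdx 3 i 2) * (t (spES i) - t (spFS i)))
    fun k => by
      have := hm (spS k)
      simp only [Smat_mulVec_spS, Emat_mulVec_mul_Phi_rxn, hes, hfs, Matrix.cons_val_zero,
        Matrix.cons_val_one, Matrix.cons_val, Pi.zero_apply] at this
      rw [← sub_eq_zero, ← Finset.sum_sub_distrib]
      refine (Finset.sum_congr rfl fun i _ => ?_).trans this
      split_ifs <;> ring
  refine ⟨hes, hfs, fun i => ?_⟩
  simpa [(hl i 2).ne', sub_eq_zero] using congrFun hflow i

lemma isSteady_Emat_mulVec_iff {lam : Fin (3*n) → ℝ} (hlam : ∀ c, 0 < lam c)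
    {t : Fin (3*n+3) → ℝ} : isSteady n (Emat n *ᵥ lam) t ↔ BinomialEqs n t :=
  ⟨binomialEqs_of_isSteady hlam, fun ht => ht.isSteady lam⟩

lemma BinomialEqs.spS_succ {t : Fin (3*n+3) → ℝ} (ht : BinomialEqs n t) (i : Fin n) :
    t spF * t (spS i.succ) = t spE * t (spS i.castSucc) := by
  rw [ht.fs, ht.es, ht.es_eq_fs]

lemma BinomialEqs.eq {t t' : Fin (3*n+3) → ℝ} (ht : BinomialEqs n t) (ht' : BinomialEqs n t')
    (hF0 : t spF ≠ 0) (hE : t spE = t' spE) (hF : t spF = t' spF)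
    (hS : t (spS 0) = t' (spS 0)) : t = t' := by
  have hSk : ∀ k, t (spS k) = t' (spS k) := by
    intro k
    induction k using Fin.induction with
    | zero => exact hS
    | succ i ih =>
      refine mul_left_cancel₀ hF0 ?_
      rw [ht.spS_succ, hF, ht'.spS_succ, hE, ih]
  funext m
  induction m using species_cases with
  | hE => exact hE
  | hF => exact hF
  | hS k => exact hSk k
  | hES i => rw [← ht.es, ← ht'.es, hE, hSk]
  | hFS i => rw [← ht.fs, ← ht'.fs, hF, hSk]

lemma gL_apply (g : Fin 3 → ℝ) (j : Fin (3*n+3)) :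
    gL n g j = g 0 ^ Lmat n j 0 * g 1 ^ Lmat n j 1 * g 2 ^ Lmat n j 2 :=
  Fin.prod_univ_three _

lemma gL_spE (g : Fin 3 → ℝ) : gL n g spE = g 0 * g 1 ^ ((n : ℤ) - 1) / g 2 := by
  simp [gL_apply, Lmat, spE, div_eq_mul_inv]

lemma gL_spF (g : Fin 3 → ℝ) : gL n g spF = g 0 * g 1 ^ ((n : ℤ) - 2) / g 2 := by
  simp [gL_apply, Lmat, spF, div_eq_mul_inv]

lemma gL_spS (g : Fin 3 → ℝ) (k : Fin (n+1)) : gL n g (spS k) = g 1 ^ ((k : ℤ) - n) / g 0 := by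
  obtain ⟨_ | k, hk⟩ := k
  · simp [gL_apply, Lmat, spS, div_eq_mul_inv, mul_comm]
  · have h3 : (3 * (k + 1) + 1) / 3 = k + 1 := by omega
    simp only [gL_apply, Lmat, Matrix.of_apply, spS, h3]
    rw [if_neg (by omega), if_neg (by omega), if_neg (by omega), if_pos (by omega)]
    simp [div_eq_mul_inv, mul_comm]

lemma gL_spES (g : Fin 3 → ℝ) (i : Fin n) : gL n g (spES i) = g 1 ^ ((i : ℤ) - 1) / g 2 := by
  have h3 : (3 * (i : ℕ) + 3) / 3 = i + 1 := by omega
  simp only [gL_apply, Lmat, Matrix.of_apply, spES, h3]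
  rw [if_neg (by omega), if_neg (by omega), if_neg (by omega), if_neg (by omega)]
  simp [div_eq_mul_inv, show ((i : ℤ) + 1 - 2) = i - 1 by ring]

lemma gL_spFS (g : Fin 3 → ℝ) (i : Fin n) : gL n g (spFS i) = g 1 ^ ((i : ℤ) - 1) / g 2 := by
  have h3 : (3 * (i : ℕ) + 5) / 3 = i + 1 := by omega
  simp only [gL_apply, Lmat, Matrix.of_apply, spFS, h3]
  rw [if_neg (by omega), if_neg (by omega), if_neg (by omega), if_neg (by omega)]
  simp [div_eq_mul_inv, show ((i : ℤ) + 1 - 2) = i - 1 by ring]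

lemma gL_pos {g : Fin 3 → ℝ} (hg : ∀ c, 0 < g c) (j : Fin (3*n+3)) : 0 < gL n g j :=
  Finset.prod_pos fun c _ => zpow_pos (hg c) _

lemma binomialEqs_gL {g : Fin 3 → ℝ} (hg : ∀ c, g c ≠ 0) : BinomialEqs n (gL n g) where
  es i := by
    rw [gL_spE, gL_spS, gL_spES, Fin.val_castSucc]
    field_simp [hg 0, hg 2]
    rw [← zpow_add₀ (hg 1)]
    congr 1
    ring
  fs i := by
    rw [gL_spF, gL_spS, gL_spFS, Fin.val_succ]
    field_simp [hg 0, hg 2]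
    rw [← zpow_add₀ (hg 1)]
    congr 1
    push_cast
    ring
  es_eq_fs i := by rw [gL_spES, gL_spFS]

lemma exists_gL_eq {t : Fin (3*n+3) → ℝ} (ht : BinomialEqs n t) (hpos : ∀ j, 0 < t j) :
    ∃ g : Fin 3 → ℝ, (∀ c, 0 < g c) ∧ gL n g = t := by
  have hE := hpos spE
  have hF := hpos spF
  have hS := hpos (spS 0)
  have hg : ∀ c, 0 < ![(t spF / t spE) ^ n / t (spS 0), t spE / t spF,
      t spF / (t spE ^ 2 * t (spS 0))] c := by
    intro c
    fin_cases c <;> simp only [Fin.zero_eta, Fin.mk_one, Fin.reduceFinMk, Matrix.cons_val] <;>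
      positivity
  have hρ : (t spF / t spE) ^ n * (t spE / t spF) ^ n = 1 := by
    rw [← mul_pow, div_mul_div_comm, mul_comm (t spF), div_self (by positivity), one_pow]
  have hρ0 : t spE / t spF ≠ 0 := (div_pos hE hF).ne'
  refine ⟨_, hg, (ht.eq (binomialEqs_gL fun c => (hg c).ne') hF.ne' ?_ ?_ ?_).symm⟩
  · rw [gL_spE]
    simp only [Matrix.cons_val_zero, Matrix.cons_val_one, Matrix.cons_val, zpow_sub₀ hρ0,
      zpow_natCast]
    field_simp
    exact hρ.symm
  · rw [gL_spF]
    simp only [Matrix.cons_val_zero, Matrix.cons_val_one, Matrix.cons_val, zpow_sub₀ hρ0,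
      zpow_natCast]
    field_simp
    exact hρ.symm
  · rw [gL_spS]
    simp only [Matrix.cons_val_zero, Matrix.cons_val_one, Fin.val_zero, Nat.cast_zero, zero_sub,
      zpow_neg, zpow_natCast]
    field_simp
    rw [mul_comm, hρ]

lemma exists_gL_mul_iff {a b : Fin (3*n+3) → ℝ} (ha : ∀ j, 0 < a j) (hb : ∀ j, 0 < b j) :
    (∃ g : Fin 3 → ℝ, (∀ i, 0 < g i) ∧ ∀ j, b j = gL n g j * a j) ↔ BinomialEqs n (b / a) := by
  have hdiv : ∀ t, (∀ j, b j = t j * a j) ↔ b / a = t := fun t => by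
    simp only [funext_iff, Pi.div_apply, div_eq_iff (ha _).ne']
  simp only [hdiv]
  constructor
  · rintro ⟨g, hg, hgt⟩
    rw [hgt]
    exact binomialEqs_gL fun c => (hg c).ne'
  · intro h
    obtain ⟨g, hg, hgt⟩ := exists_gL_eq h fun j => div_pos (hb j) (ha j)
    exact ⟨g, hg, hgt.symm⟩

lemma log_gL {g : Fin 3 → ℝ} (hg : ∀ c, 0 < g c) (j : Fin (3*n+3)) :
    Real.log (gL n g j) = ((Lmat n).map (fun z : ℤ => (z : ℝ)) *ᵥ fun c => Real.log (g c)) j := by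
  rw [gL, Real.log_prod fun c _ => (zpow_pos (hg c) _).ne']
  simp [Matrix.mulVec, dotProduct, Real.log_zpow]

lemma exists_log_sub_eq_iff {a b : Fin (3*n+3) → ℝ} (ha : ∀ j, 0 < a j) (hb : ∀ j, 0 < b j) :
    (∃ u : Fin 3 → ℝ,
        (fun j => Real.log (b j) - Real.log (a j)) = (Lmat n).map (fun z : ℤ => (z : ℝ)) *ᵥ u) ↔
      ∃ g : Fin 3 → ℝ, (∀ i, 0 < g i) ∧ ∀ j, b j = gL n g j * a j := by
  constructor
  · rintro ⟨u, hu⟩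
    refine ⟨fun c => Real.exp (u c), fun c => Real.exp_pos _, fun j => ?_⟩
    have hlog := log_gL (fun c => Real.exp_pos (u c)) j
    simp only [Real.log_exp, ← hu] at hlog
    rw [← Real.exp_log (gL_pos (fun c => Real.exp_pos (u c)) j), hlog, Real.exp_sub,
      Real.exp_log (hb j), Real.exp_log (ha j), div_mul_cancel₀ _ (ha j).ne']
  · rintro ⟨g, hg, hbg⟩
    refine ⟨fun c => Real.log (g c), funext fun j => ?_⟩
    rw [← log_gL hg, ← Real.log_div (hb j).ne' (ha j).ne', hbg,
      mul_div_cancel_right₀ _ (ha j).ne']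

end

theorem steady_states_of_kappaOf_general (n : ℕ)
    (a : Fin (3*n+3) → ℝ) (ha : ∀ j, 0 < a j)
    (lam : Fin (3*n) → ℝ) (hlam : ∀ c, 0 < lam c)
    (b : Fin (3*n+3) → ℝ) (hb : ∀ j, 0 < b j) :
    (isSteady n (kappaOf n a lam) b ↔
      ∃ u : Fin 3 → ℝ,
        (fun j => Real.log (b j) - Real.log (a j)) =
          ((Lmat n).map (fun z : ℤ => (z : ℝ))).mulVec u) ∧
    (isSteady n (kappaOf n a lam) b ↔
      ∃ g : Fin 3 → ℝ, (∀ i, 0 < g i) ∧ ∀ j, b j = gL n g j * a j) := by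
  have hg : isSteady n (kappaOf n a lam) b ↔
      ∃ g : Fin 3 → ℝ, (∀ i, 0 < g i) ∧ ∀ j, b j = gL n g j * a j := by
    rw [isSteady_kappaOf_iff, isSteady_Emat_mulVec_iff hlam, exists_gL_mul_iff ha hb]
  exact ⟨hg.trans (exists_log_sub_eq_iff ha hb).symm, hg⟩

/-- `b ∈ ℝ_{>0}^{3+3n}` is a positive steady state of
`ẋ = S diag(κ(a,λ)) Φ(x)` iff `ln b − ln a ∈ im L`, equivalently iff
`b = diag(g^L) a` for some `g ∈ ℝ_{>0}³`. -/
theorem steady_states_of_kappaOf (n : ℕ) (hn : 2 ≤ n)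
    (a : Fin (3*n+3) → ℝ) (ha : ∀ j, 0 < a j)
    (lam : Fin (3*n) → ℝ) (hlam : ∀ c, 0 < lam c)
    (b : Fin (3*n+3) → ℝ) (hb : ∀ j, 0 < b j) :
    (isSteady n (kappaOf n a lam) b ↔
      ∃ u : Fin 3 → ℝ,
        (fun j => Real.log (b j) - Real.log (a j)) =
          ((Lmat n).map (fun z : ℤ => (z : ℝ))).mulVec u) ∧
    (isSteady n (kappaOf n a lam) b ↔
      ∃ g : Fin 3 → ℝ, (∀ i, 0 < g i) ∧ ∀ j, b j = gL n g j * a j) :=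
  steady_states_of_kappaOf_general n a ha lam hlam b hb

end Phos
end

section
/- Let a ∈ ℝ_{>0}^{3+3n}, g ∈ ℝ_{>0}^3, and set b = diag(g^L) a. Then Z a = Z b if and only if Θ(g,a) = 0. Moreover, the map g ↦ g^L is injective on ℝ_{>0}^3; consequently, if g ≠ (1,1,1) and Θ(g,a) = 0, then b and a are distinct vectors with Z a = Z b. -/
open Finset

namespace Phos

/-- For `b = diag(g^L) a` one has `Z a = Z b ↔ Θ(g,a) = 0`;
the map `g ↦ g^L` is injective on `ℝ_{>0}³`; consequently, if `g ≠ (1,1,1)`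
and `Θ(g,a) = 0` then `b ≠ a` and `Z a = Z b`. -/
theorem coset_condition_Theta (n : ℕ) (hn : 2 ≤ n)
    (a : Fin (3*n+3) → ℝ) (ha : ∀ j, 0 < a j)
    (g : Fin 3 → ℝ) (hg : ∀ i, 0 < g i) :
    ((Zmat n).mulVec a = (Zmat n).mulVec (fun j => gL n g j * a j) ↔
      Theta n g a = 0) ∧
    (∀ g₁ g₂ : Fin 3 → ℝ, (∀ i, 0 < g₁ i) → (∀ i, 0 < g₂ i) →
      gL n g₁ = gL n g₂ → g₁ = g₂) ∧
    (g ≠ (fun _ => 1) → Theta n g a = 0 →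
      (fun j => gL n g j * a j) ≠ a ∧
      (Zmat n).mulVec a = (Zmat n).mulVec (fun j => gL n g j * a j)) := by
  have hTheta : Theta n g a =
      (Zmat n).mulVec (fun j => gL n g j * a j) - (Zmat n).mulVec a := by
    have hv : (fun j => a j * (gL n g j - 1)) = (fun j => gL n g j * a j) - a := by
      funext j
      show a j * (gL n g j - 1) = gL n g j * a j - a j
      ring
    unfold Theta
    rw [hv, Matrix.mulVec_sub]
  have hiff : (Zmat n).mulVec a = (Zmat n).mulVec (fun j => gL n g j * a j) ↔
      Theta n g a = 0 := by
    rw [hTheta, sub_eq_zero, eq_comm]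
  have hinj : ∀ g₁ g₂ : Fin 3 → ℝ, (∀ i, 0 < g₁ i) → (∀ i, 0 < g₂ i) →
      gL n g₁ = gL n g₂ → g₁ = g₂ := by
    intro g₁ g₂ h₁ h₂ hE
    have h1lt : (1:ℕ) < 3*n+3 := by omega
    have h5lt : (5:ℕ) < 3*n+3 := by omega
    have h8lt : (8:ℕ) < 3*n+3 := by omega
    have e8 := congrFun hE ⟨8, h8lt⟩
    have e5 := congrFun hE ⟨5, h5lt⟩
    have e1 := congrFun hE ⟨1, h1lt⟩
    simp [gL, Lmat, Fin.prod_univ_three] at e8 e5 e1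
    have n2 : (g₂ 2) ≠ 0 := (h₂ 2).ne'
    rw [e8] at e5
    have e1' : g₁ 1 = g₂ 1 := inv_injective (mul_right_cancel₀ (inv_ne_zero n2) e5)
    rw [e1'] at e1
    have n1 : (g₂ 1 ^ n)⁻¹ ≠ 0 := inv_ne_zero (pow_ne_zero _ (h₂ 1).ne')
    have e0 : g₁ 0 = g₂ 0 := inv_injective (mul_right_cancel₀ n1 e1)
    funext i; fin_cases i <;> assumption
  refine ⟨hiff, hinj, fun hgne hθ => ⟨?_, hiff.mpr hθ⟩⟩
  intro hEq
  apply hgne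
  apply hinj g (fun _ => 1) hg (fun _ => one_pos)
  funext j
  have hj := congrFun hEq j
  have : gL n g j = 1 := by
    have := mul_right_cancel₀ (ha j).ne' (hj.trans (one_mul (a j)).symm)
    exact this
  rw [this]
  simp [gL]

end Phos
end

section
/- Let a ∈ ℝ_{>0}^{3+3n}, let ξ > 0, and let g ∈ ℝ_{>0}^3 with g_2 = ξ. Then the first and third components of Θ(g,a) vanish if and only if (g_1, g_3) solves the linear system a_1 ξ^{n−1} g_1 − ω1 g_3 = −ξ^{−1} Ω4(ξ) and a_3 ξ^{n−2} g_1 − ω3 g_3 = −ξ^{−1} Ω6(ξ). If moreover Δ(ξ) ≠ 0 (equivalently ξ ≠ ξ*), this linear system has the unique solution g_1 = ξ^{1−n} F1(ξ)/Δ(ξ) and g_3 = ξ^{−1} F3(ξ)/Δ(ξ). -/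
open Finset

/-!
The first and third rows of `Z` pick out the components `a_{1+3k}`,
resp. `a_{3+3k}`, on which `g^L` equals `g₂^{k-2}/g₃`, except for `k = 0` where it is
`g₁g₂^{n-1}/g₃`, resp. `g₁g₂^{n-2}/g₃`. Multiplied by `g₃`, these two components of `Θ` are
thus affine in `(g₁, g₃)`, which is the linear system. Its determinant is `ξ^{n-2} ω₁ ω₃ Δ(ξ)`,
so for `Δ(ξ) ≠ 0` the solution is unique, and `(g₁(ξ), g₃(ξ))` solves it by direct computation.
-/

namespace Phos

lemma div_mul_sub_div_eq_zero_iff {K : Type*} [Field K] {p q s t x : K} (hp : p ≠ 0)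
    (hq : q ≠ 0) (ht : t ≠ 0) : p / q * x - s / t = 0 ↔ x = q * s / (p * t) := by
  rw [sub_eq_zero, div_mul_eq_mul_div, div_eq_div_iff hq ht, eq_div_iff (mul_ne_zero hp ht)]
  constructor <;> intro h <;> linear_combination h

lemma linear_system_iff_eq_of_solution {K : Type*} [Field K] {α β γ δ c d u₀ w₀ : K}
    (h : α * δ - β * γ ≠ 0) (h₁ : α * u₀ - β * w₀ = c) (h₂ : γ * u₀ - δ * w₀ = d) (u w : K) :
    (α * u - β * w = c ∧ γ * u - δ * w = d) ↔ (u = u₀ ∧ w = w₀) := by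
  constructor
  · rintro ⟨e₁, e₂⟩
    have hu : (α * δ - β * γ) * (u - u₀) = 0 := by
      linear_combination δ * (e₁ - h₁) - β * (e₂ - h₂)
    have hw : (α * δ - β * γ) * (w - w₀) = 0 := by
      linear_combination γ * (e₁ - h₁) - α * (e₂ - h₂)
    rw [mul_eq_zero_iff_left h, sub_eq_zero] at hu hw
    exact ⟨hu, hw⟩
  · rintro ⟨rfl, rfl⟩
    exact ⟨h₁, h₂⟩

section

variable {n : ℕ}

/-- `triIdx n k r` is the `0`-based index of the component `a_{1+3k+r}`. -/
def triIdx (n : ℕ) (k : Fin (n+1)) (r : Fin 3) : Fin (3*n+3) := ⟨3*k + r, by omega⟩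

lemma sum_ite_mod_three_eq_sum_triIdx {M : Type*} [AddCommMonoid M] (r : Fin 3)
    (f : Fin (3*n+3) → M) :
    ∑ j : Fin (3*n+3), (if (j : ℕ) % 3 = r then f j else 0) = ∑ k, f (triIdx n k r) := by
  have hinv : ∀ j : Fin (3*n+3), (j : ℕ) % 3 = r → triIdx n ⟨j / 3, by omega⟩ r = j :=
    fun j hj => Fin.ext (by simp only [triIdx]; omega)
  rw [← sum_filter]
  refine sum_nbij' (fun j => ⟨j / 3, by omega⟩) (triIdx n · r) (by simp)
    (fun k _ => by simp [triIdx]) (fun j hj => hinv j (mem_filter.1 hj).2)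
    (fun k _ => Fin.ext (by simp only [triIdx]; omega))
    (fun j hj => by rw [hinv j (mem_filter.1 hj).2])

lemma Zmat_apply_of_ne_one {r : Fin 3} (hr : r ≠ 1) (j : Fin (3*n+3)) :
    Zmat n r j = if (j : ℕ) % 3 = r then 1 else 0 := by
  fin_cases r <;> simp_all [Zmat]

lemma Theta_eq_sum_triIdx (g : Fin 3 → ℝ) (a : Fin (3*n+3) → ℝ) {r : Fin 3} (hr : r ≠ 1) :
    Theta n g a r = ∑ k, a (triIdx n k r) * (gL n g (triIdx n k r) - 1) := by
  simp only [Theta, Matrix.mulVec, dotProduct, Zmat_apply_of_ne_one hr, ite_mul, one_mul,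
    zero_mul]
  exact sum_ite_mod_three_eq_sum_triIdx r _

lemma gL_triIdx_succ (g : Fin 3 → ℝ) (k : Fin n) {r : Fin 3} (hr : r ≠ 1) :
    gL n g (triIdx n k.succ r) = g 1 ^ ((k : ℤ) - 1) * (g 2)⁻¹ := by
  have hr' : (r : ℕ) ≠ 1 := fun h => hr (Fin.ext h)
  have hj : (triIdx n k.succ r : ℕ) = 3 * ((k : ℕ) + 1) + r := by simp [triIdx]
  have h0 : 3 * ((k : ℕ) + 1) + r ≠ 0 := by omega
  have h1 : 3 * ((k : ℕ) + 1) + r ≠ 1 := by omega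
  have h2 : 3 * ((k : ℕ) + 1) + r ≠ 2 := by omega
  have hmod : (3 * ((k : ℕ) + 1) + r) % 3 ≠ 1 := by omega
  have hdiv : (3 * ((k : ℕ) + 1) + r) / 3 = k + 1 := by omega
  simp only [gL, Lmat, Fin.prod_univ_three, Matrix.of_apply, hj, h0, h1, h2, hmod, hdiv,
    if_false]
  simp only [Matrix.cons_val, zpow_zero, zpow_neg_one, one_mul]
  push_cast
  ring_nf

lemma gL_triIdx_zero_zero (g : Fin 3 → ℝ) :
    gL n g (triIdx n 0 0) = g 0 * g 1 ^ ((n : ℤ) - 1) * (g 2)⁻¹ := by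
  simp [gL, Fin.prod_univ_three, Lmat, triIdx]

lemma gL_triIdx_zero_two (g : Fin 3 → ℝ) :
    gL n g (triIdx n 0 2) = g 0 * g 1 ^ ((n : ℤ) - 2) * (g 2)⁻¹ := by
  simp [gL, Fin.prod_univ_three, Lmat, triIdx]

lemma av_eq_triIdx (a : Fin (3*n+3) → ℝ) (k : Fin (n+1)) (r : Fin 3) {j : ℕ}
    (hj : j = 3 * k + r + 1) : av n a j = a (triIdx n k r) := by
  subst hj; simp only [av, add_tsub_cancel_right]; exact dif_pos (triIdx n k r).isLt

lemma om1_eq_sum (a : Fin (3*n+3) → ℝ) : om1 n a = ∑ k, a (triIdx n k 0) := by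
  rw [om1, ← Fin.sum_univ_eq_sum_range]
  exact sum_congr rfl fun k _ => av_eq_triIdx a k 0 (by simp; ring)

lemma om3_eq_sum (a : Fin (3*n+3) → ℝ) : om3 n a = ∑ k, a (triIdx n k 2) := by
  rw [om3, ← Fin.sum_univ_eq_sum_range]
  exact sum_congr rfl fun k _ => av_eq_triIdx a k 2 (by simp; ring)

lemma Om4_eq_sum (a : Fin (3*n+3) → ℝ) (ξ : ℝ) :
    Om4 n a ξ = ∑ k : Fin n, a (triIdx n k.succ 0) * ξ ^ (k : ℕ) := by
  rw [Om4, ← Ico_add_one_right_eq_Icc, sum_Ico_eq_sum_range, add_tsub_cancel_right,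
    ← Fin.sum_univ_eq_sum_range]
  refine sum_congr rfl fun k _ => ?_
  rw [av_eq_triIdx a k.succ 0 (by simp; ring), add_tsub_cancel_left]

lemma Om6_eq_sum (a : Fin (3*n+3) → ℝ) (ξ : ℝ) :
    Om6 n a ξ = ∑ k : Fin n, a (triIdx n k.succ 2) * ξ ^ (k : ℕ) := by
  rw [Om6, ← Ico_add_one_right_eq_Icc, sum_Ico_eq_sum_range, add_tsub_cancel_right,
    ← Fin.sum_univ_eq_sum_range]
  refine sum_congr rfl fun k _ => ?_
  rw [av_eq_triIdx a k.succ 2 (by simp; ring), add_tsub_cancel_left]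

lemma Theta_mul_g_two_eq (g : Fin 3 → ℝ) (a : Fin (3*n+3) → ℝ) {r : Fin 3} (hr : r ≠ 1)
    {e : ℤ} (he : gL n g (triIdx n 0 r) = g 0 * g 1 ^ e * (g 2)⁻¹) (hg1 : g 1 ≠ 0) (hg2 : g 2 ≠ 0) :
    Theta n g a r * g 2 = a (triIdx n 0 r) * g 1 ^ e * g 0 - (∑ k, a (triIdx n k r)) * g 2
      + (g 1)⁻¹ * ∑ k : Fin n, a (triIdx n k.succ r) * g 1 ^ (k : ℕ) := by
  have htail : ∑ k : Fin n, a (triIdx n k.succ r) * (gL n g (triIdx n k.succ r) - 1)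
      = (g 1)⁻¹ * (∑ k : Fin n, a (triIdx n k.succ r) * g 1 ^ (k : ℕ)) * (g 2)⁻¹
        - ∑ k : Fin n, a (triIdx n k.succ r) := by
    rw [mul_sum, sum_mul, ← sum_sub_distrib]
    refine sum_congr rfl fun k _ => ?_
    rw [gL_triIdx_succ g k hr, zpow_sub_one₀ hg1, zpow_natCast]
    ring
  rw [Theta_eq_sum_triIdx g a hr, Fin.sum_univ_succ,
    Fin.sum_univ_succ (f := fun k => a (triIdx n k r)), htail, he]
  field_simp
  ring

lemma Theta_zero_eq_zero_iff (hn : 1 ≤ n) (g : Fin 3 → ℝ) (a : Fin (3*n+3) → ℝ)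
    (hg1 : g 1 ≠ 0) (hg2 : g 2 ≠ 0) :
    Theta n g a 0 = 0 ↔
      av n a 1 * g 1 ^ (n - 1) * g 0 - om1 n a * g 2 = -((g 1)⁻¹ * Om4 n a (g 1)) := by
  have hpow : g 1 ^ ((n : ℤ) - 1) = g 1 ^ (n - 1) := by
    rw [← zpow_natCast, Nat.cast_sub hn, Nat.cast_one]
  rw [← mul_eq_zero_iff_right hg2,
    Theta_mul_g_two_eq g a (by decide) (gL_triIdx_zero_zero g) hg1 hg2, ← om1_eq_sum,
    ← Om4_eq_sum, av_eq_triIdx a 0 0 (j := 1) (by simp), hpow, add_eq_zero_iff_eq_neg]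

lemma Theta_two_eq_zero_iff (hn : 2 ≤ n) (g : Fin 3 → ℝ) (a : Fin (3*n+3) → ℝ)
    (hg1 : g 1 ≠ 0) (hg2 : g 2 ≠ 0) :
    Theta n g a 2 = 0 ↔
      av n a 3 * g 1 ^ (n - 2) * g 0 - om3 n a * g 2 = -((g 1)⁻¹ * Om6 n a (g 1)) := by
  have hpow : g 1 ^ ((n : ℤ) - 2) = g 1 ^ (n - 2) := by
    rw [← zpow_natCast, Nat.cast_sub hn, Nat.cast_two]
  rw [← mul_eq_zero_iff_right hg2,
    Theta_mul_g_two_eq g a (by decide) (gL_triIdx_zero_two g) hg1 hg2, ← om3_eq_sum,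
    ← Om6_eq_sum, av_eq_triIdx a 0 2 (j := 3) (by simp), hpow, add_eq_zero_iff_eq_neg]

lemma Dlt_mul_om1_mul_om3 (a : Fin (3*n+3) → ℝ) (ξ : ℝ) (hω1 : om1 n a ≠ 0)
    (hω3 : om3 n a ≠ 0) :
    Dlt n a ξ * (om1 n a * om3 n a) = av n a 1 * ξ * om3 n a - om1 n a * av n a 3 := by
  rw [Dlt]; field_simp

lemma linear_system_det_ne_zero (hn : 2 ≤ n) (a : Fin (3*n+3) → ℝ) {ξ : ℝ} (hξ : ξ ≠ 0)
    (hω1 : om1 n a ≠ 0) (hω3 : om3 n a ≠ 0) (hΔ : Dlt n a ξ ≠ 0) :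
    av n a 1 * ξ ^ (n - 1) * om3 n a - om1 n a * (av n a 3 * ξ ^ (n - 2)) ≠ 0 := by
  have hdet : av n a 1 * ξ ^ (n - 1) * om3 n a - om1 n a * (av n a 3 * ξ ^ (n - 2))
      = ξ ^ (n - 2) * (Dlt n a ξ * (om1 n a * om3 n a)) := by
    rw [Dlt_mul_om1_mul_om3 a ξ hω1 hω3, show n - 1 = n - 2 + 1 by omega, pow_succ]
    ring
  rw [hdet]
  exact mul_ne_zero (pow_ne_zero _ hξ) (mul_ne_zero hΔ (mul_ne_zero hω1 hω3))

lemma g1f_g3f_solve (hn : 2 ≤ n) (a : Fin (3*n+3) → ℝ) {ξ : ℝ} (hξ : ξ ≠ 0)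
    (hω1 : om1 n a ≠ 0) (hω3 : om3 n a ≠ 0) (hΔ : Dlt n a ξ ≠ 0) :
    av n a 1 * ξ ^ (n - 1) * g1f n a ξ - om1 n a * g3f n a ξ = -(ξ⁻¹ * Om4 n a ξ) ∧
      av n a 3 * ξ ^ (n - 2) * g1f n a ξ - om3 n a * g3f n a ξ = -(ξ⁻¹ * Om6 n a ξ) := by
  have hD := Dlt_mul_om1_mul_om3 a ξ hω1 hω3
  obtain ⟨m, rfl⟩ : ∃ m, n = m + 2 := ⟨n - 2, by omega⟩
  have hpow : ξ ^ ((1 : ℤ) - ((m + 2 : ℕ) : ℤ)) = (ξ ^ (m + 1))⁻¹ := by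
    rw [show (1 : ℤ) - ((m + 2 : ℕ) : ℤ) = -((m + 1 : ℕ) : ℤ) by push_cast; ring, zpow_neg,
      zpow_natCast]
  simp only [g1f, g3f, F1, F3, hpow, show m + 2 - 1 = m + 1 by omega, add_tsub_cancel_right]
  constructor
  · field_simp
    linear_combination Om4 (m + 2) a ξ * hD
  · field_simp
    linear_combination ξ ^ (m + 1) * Om6 (m + 2) a ξ * hD

end

/-- For `g ∈ ℝ_{>0}³` with `g₂ = ξ > 0`, the first and third
components of `Θ(g,a)` vanish iff `(g₁,g₃)` solves the linear system
`a₁ξ^{n−1}g₁ − ω1 g₃ = −ξ⁻¹Ω4(ξ)`, `a₃ξ^{n−2}g₁ − ω3 g₃ = −ξ⁻¹Ω6(ξ)`;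
if moreover `Δ(ξ) ≠ 0` (equivalently `ξ ≠ ξ*`), the system has the unique
solution `g₁ = ξ^{1−n}F1(ξ)/Δ(ξ)`, `g₃ = ξ⁻¹F3(ξ)/Δ(ξ)`. -/
theorem linear_system_for_g1_g3 (n : ℕ) (hn : 2 ≤ n)
    (a : Fin (3*n+3) → ℝ) (ha : ∀ j, 0 < a j)
    (ξ : ℝ) (hξ : 0 < ξ)
    (g : Fin 3 → ℝ) (hg : ∀ i, 0 < g i) (hg2 : g 1 = ξ) :
    ((Theta n g a 0 = 0 ∧ Theta n g a 2 = 0) ↔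
      (av n a 1 * ξ ^ (n-1) * g 0 - om1 n a * g 2 = -(ξ⁻¹ * Om4 n a ξ) ∧
       av n a 3 * ξ ^ (n-2) * g 0 - om3 n a * g 2 = -(ξ⁻¹ * Om6 n a ξ))) ∧
    (Dlt n a ξ ≠ 0 ↔ ξ ≠ xistar n a) ∧
    (Dlt n a ξ ≠ 0 →
      ∀ u w : ℝ,
        (av n a 1 * ξ ^ (n-1) * u - om1 n a * w = -(ξ⁻¹ * Om4 n a ξ) ∧
         av n a 3 * ξ ^ (n-2) * u - om3 n a * w = -(ξ⁻¹ * Om6 n a ξ)) ↔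
        (u = g1f n a ξ ∧ w = g3f n a ξ)) := by
  have ha1 : av n a 1 ≠ 0 := by
    rw [av_eq_triIdx a 0 0 (j := 1) (by simp)]
    exact (ha _).ne'
  have hω1 : om1 n a ≠ 0 := by
    rw [om1_eq_sum]
    exact (sum_pos (fun k _ => ha _) univ_nonempty).ne'
  have hω3 : om3 n a ≠ 0 := by
    rw [om3_eq_sum]
    exact (sum_pos (fun k _ => ha _) univ_nonempty).ne'
  refine ⟨?_, (div_mul_sub_div_eq_zero_iff ha1 hω1 hω3).not, fun hΔ => ?_⟩
  · subst hg2
    exact and_congr (Theta_zero_eq_zero_iff (by omega) g a (hg 1).ne' (hg 2).ne')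
      (Theta_two_eq_zero_iff hn g a (hg 1).ne' (hg 2).ne')
  · obtain ⟨h₁, h₂⟩ := g1f_g3f_solve hn a hξ.ne' hω1 hω3 hΔ
    exact linear_system_iff_eq_of_solution
      (linear_system_det_ne_zero hn a hξ.ne' hω1 hω3 hΔ) h₁ h₂

end Phos
end
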